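/- arXiv:1107.2264 — 13 statements merged into one kernel-verified Lean document; each statement's English description precedes it below -/
import Mathlib

section
/- Let x, y, a, b be complex numbers, let p > 1 and q be real numbers with 1/p + 1/q = 1, and let μ, ν, λ be positive real numbers. If λ^{1/(p-1)} ≥ μ^{1/(p-1)}·|a|^q + ν^{1/(p-1)}·|b|^q, then |x|^p/μ + |y|^p/ν ≥ |a·x + b·y|^p/λ. -/
/-!
After the triangle inequality it suffices to bound `‖a‖‖x‖ + ‖b‖‖y‖`. Writing
`‖a‖‖x‖ = (μ^(1/p)‖a‖)(‖x‖/μ^(1/p))` (and likewise with `ν`), Hölder's inequality gives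
`(‖a‖‖x‖ + ‖b‖‖y‖)^p ≤ (μ^(1/(p-1))‖a‖^q + ν^(1/(p-1))‖b‖^q)^(p-1) (‖x‖^p/μ + ‖y‖^p/ν)`,
since `q/p = 1/(p-1)` and `p/q = p-1`; the hypothesis bounds the first factor by `λ`.
-/

open Real

namespace Real

variable {p q : ℝ}

lemma mul_add_mul_le_Lp_mul_Lq (hpq : p.HolderConjugate q) {u₁ u₂ v₁ v₂ : ℝ}
    (hu₁ : 0 ≤ u₁) (hu₂ : 0 ≤ u₂) (hv₁ : 0 ≤ v₁) (hv₂ : 0 ≤ v₂) :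
    u₁ * v₁ + u₂ * v₂ ≤ (u₁ ^ p + u₂ ^ p) ^ (1 / p) * (v₁ ^ q + v₂ ^ q) ^ (1 / q) := by
  have := inner_le_Lp_mul_Lq_of_nonneg Finset.univ (f := ![u₁, u₂]) (g := ![v₁, v₂]) hpq
    (by simp [Fin.forall_fin_two, hu₁, hu₂]) (by simp [Fin.forall_fin_two, hv₁, hv₂])
  simpa [Fin.sum_univ_two] using this

lemma mul_add_mul_rpow_le_weighted_Lq_mul_Lp (hpq : p.HolderConjugate q) {μ ν s t u v : ℝ}
    (hμ : 0 < μ) (hν : 0 < ν) (hs : 0 ≤ s) (ht : 0 ≤ t) (hu : 0 ≤ u) (hv : 0 ≤ v) :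
    (s * u + t * v) ^ p ≤
      (μ ^ (1 / (p - 1)) * s ^ q + ν ^ (1 / (p - 1)) * t ^ q) ^ (p - 1) *
        (u ^ p / μ + v ^ p / ν) := by
  have hp := hpq.pos
  have hqp : p⁻¹ * q = 1 / (p - 1) := by
    rw [hpq.conjugate_eq]; field_simp
  have weight_rpow {w : ℝ} (hw : 0 < w) (z : ℝ) (hz : 0 ≤ z) :
      (w ^ p⁻¹ * z) ^ q = w ^ (1 / (p - 1)) * z ^ q := by
    rw [mul_rpow (by positivity) hz, ← rpow_mul hw.le, hqp]
  have div_weight_rpow {w : ℝ} (hw : 0 < w) (z : ℝ) (hz : 0 ≤ z) :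
      (z / w ^ p⁻¹) ^ p = z ^ p / w := by
    rw [div_rpow hz (by positivity), rpow_inv_rpow hw.le hp.ne']
  have rescale :
      s * u + t * v = (μ ^ p⁻¹ * s) * (u / μ ^ p⁻¹) + (ν ^ p⁻¹ * t) * (v / ν ^ p⁻¹) := by
    field_simp
  have holder := mul_add_mul_le_Lp_mul_Lq hpq.symm (u₁ := μ ^ p⁻¹ * s) (u₂ := ν ^ p⁻¹ * t)
    (v₁ := u / μ ^ p⁻¹) (v₂ := v / ν ^ p⁻¹) (by positivity) (by positivity) (by positivity)
    (by positivity)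
  rw [← rescale, weight_rpow hμ s hs, weight_rpow hν t ht, div_weight_rpow hμ u hu,
    div_weight_rpow hν v hv] at holder
  calc (s * u + t * v) ^ p
      ≤ ((μ ^ (1 / (p - 1)) * s ^ q + ν ^ (1 / (p - 1)) * t ^ q) ^ (1 / q) *
          (u ^ p / μ + v ^ p / ν) ^ (1 / p)) ^ p := by gcongr
    _ = _ := by
      rw [mul_rpow (by positivity) (by positivity), ← rpow_mul (by positivity),
        ← rpow_mul (by positivity), one_div_mul_eq_div, hpq.div_conj_eq_sub_one,
        one_div_mul_cancel hp.ne', rpow_one]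

end Real

/-- Theorem 1 (i): Euler–Lagrange / Bohr type inequality for complex numbers,
case μ, ν, λ > 0. -/
theorem bohr_type_complex_case_i (x y a b : ℂ) (p q : ℝ) (hp : 1 < p)
    (hpq : 1 / p + 1 / q = 1) (μ ν lam : ℝ) (hμ : 0 < μ) (hν : 0 < ν) (hlam : 0 < lam)
    (h : μ ^ (1 / (p - 1)) * ‖a‖ ^ q + ν ^ (1 / (p - 1)) * ‖b‖ ^ q
      ≤ lam ^ (1 / (p - 1))) :
    ‖x‖ ^ p / μ + ‖y‖ ^ p / ν ≥ ‖a * x + b * y‖ ^ p / lam := by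
  have hpq : p.HolderConjugate q := holderConjugate_iff.mpr ⟨hp, by simpa only [one_div] using hpq⟩
  have triangle : ‖a * x + b * y‖ ≤ ‖a‖ * ‖x‖ + ‖b‖ * ‖y‖ := by
    simpa only [norm_mul] using norm_add_le (a * x) (b * y)
  rw [ge_iff_le, div_le_iff₀ hlam]
  calc ‖a * x + b * y‖ ^ p
      ≤ (‖a‖ * ‖x‖ + ‖b‖ * ‖y‖) ^ p := by gcongr
    _ ≤ (μ ^ (1 / (p - 1)) * ‖a‖ ^ q + ν ^ (1 / (p - 1)) * ‖b‖ ^ q) ^ (p - 1) *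
          (‖x‖ ^ p / μ + ‖y‖ ^ p / ν) :=
        mul_add_mul_rpow_le_weighted_Lq_mul_Lp hpq hμ hν (norm_nonneg _) (norm_nonneg _)
          (norm_nonneg _) (norm_nonneg _)
    _ ≤ (lam ^ (1 / (p - 1))) ^ (p - 1) * (‖x‖ ^ p / μ + ‖y‖ ^ p / ν) := by
        gcongr
    _ = (‖x‖ ^ p / μ + ‖y‖ ^ p / ν) * lam := by
        rw [one_div, rpow_inv_rpow hlam.le (by linarith), mul_comm]
end

section
/- Let x, y, a, b be complex numbers, let p > 1 and q be real numbers with 1/p + 1/q = 1, and let μ, ν, λ be nonzero real numbers with μ < 0, ν > 0 and λ < 0. If |λ|^{1/(p-1)} ≤ |μ|^{1/(p-1)}·|a|^q − |ν|^{1/(p-1)}·|b|^q, then |x|^p/μ + |y|^p/ν ≥ |a·x + b·y|^p/λ. -/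
/-!
With `u = a x + b y`, the triangle inequality gives `|a| |x| ≤ |u| + |b| |y|`. Hölder's
inequality with weights `|λ|` and `ν` bounds `(|u| + |b| |y|) ^ p` by
`|μ| |a| ^ p (|u| ^ p / |λ| + |y| ^ p / ν)`, and the hypothesis is exactly the weight condition
this needs, since `(|a| ^ p) ^ (1 / (p - 1))` is `|a| ^ q`. Dividing by `|a| ^ p` and then by `μ < 0` gives the claim.
-/

open Real Finset

/-- Hölder's inequality applied to `A i * x i = (x i * M i ^ (-1/p)) * (A i * M i ^ (1/p))`. -/
theorem Real.rpow_inner_le_weighted_Lq_mul_weighted_Lp {ι : Type*} (s : Finset ι) {p q : ℝ}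
    (hpq : p.HolderConjugate q) {A x M : ι → ℝ} (hA : ∀ i ∈ s, 0 ≤ A i)
    (hx : ∀ i ∈ s, 0 ≤ x i) (hM : ∀ i ∈ s, 0 < M i) :
    (∑ i ∈ s, A i * x i) ^ p ≤
      (∑ i ∈ s, M i ^ (1 / (p - 1)) * A i ^ q) ^ (p - 1) * ∑ i ∈ s, x i ^ p / M i := by
  have hp := hpq.pos
  have holder := inner_le_Lp_mul_Lq_of_nonneg s hpq
    (f := fun i ↦ x i * M i ^ (-p⁻¹)) (g := fun i ↦ A i * M i ^ p⁻¹)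
    (fun i hi ↦ by have := hx i hi; have := hM i hi; positivity)
    (fun i hi ↦ by have := hA i hi; have := hM i hi; positivity)
  have hfg : ∀ i ∈ s, x i * M i ^ (-p⁻¹) * (A i * M i ^ p⁻¹) = A i * x i := by
    intro i hi
    have : M i ^ p⁻¹ ≠ 0 := (rpow_pos_of_pos (hM i hi) _).ne'
    rw [rpow_neg (hM i hi).le, mul_mul_mul_comm, inv_mul_cancel₀ this, mul_one, mul_comm]
  have hf : ∀ i ∈ s, (x i * M i ^ (-p⁻¹)) ^ p = x i ^ p / M i := by
    intro i hi
    rw [mul_rpow (hx i hi) (rpow_nonneg (hM i hi).le _), ← rpow_mul (hM i hi).le,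
      neg_mul, inv_mul_cancel₀ hp.ne', rpow_neg_one, div_eq_mul_inv]
  have hg : ∀ i ∈ s, (A i * M i ^ p⁻¹) ^ q = M i ^ (1 / (p - 1)) * A i ^ q := by
    intro i hi
    have hexp : p⁻¹ * q = 1 / (p - 1) := by
      rw [hpq.conjugate_eq]
      field_simp
    rw [mul_rpow (hA i hi) (rpow_nonneg (hM i hi).le _), ← rpow_mul (hM i hi).le, hexp,
      mul_comm]
  simp only [sum_congr rfl hfg, sum_congr rfl hf, sum_congr rfl hg] at holder
  set F := ∑ i ∈ s, x i ^ p / M i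
  set G := ∑ i ∈ s, M i ^ (1 / (p - 1)) * A i ^ q
  have hF : 0 ≤ F := sum_nonneg fun i hi ↦ by have := hx i hi; have := hM i hi; positivity
  have hG : 0 ≤ G := sum_nonneg fun i hi ↦ by have := hA i hi; have := hM i hi; positivity
  calc (∑ i ∈ s, A i * x i) ^ p ≤ (F ^ (1 / p) * G ^ (1 / q)) ^ p :=
        rpow_le_rpow (sum_nonneg fun i hi ↦ mul_nonneg (hA i hi) (hx i hi)) holder hp.le
    _ = G ^ (p - 1) * F := by
        rw [mul_rpow (rpow_nonneg hF _) (rpow_nonneg hG _), ← rpow_mul hF, ← rpow_mul hG,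
          one_div_mul_cancel hp.ne', rpow_one, one_div_mul_eq_div, hpq.div_conj_eq_sub_one,
          mul_comm]

theorem Real.mul_add_mul_rpow_le {p q : ℝ} (hpq : p.HolderConjugate q) {A B s t M N L : ℝ}
    (hA : 0 ≤ A) (hB : 0 ≤ B) (hs : 0 ≤ s) (ht : 0 ≤ t) (hM : 0 < M) (hN : 0 < N) (hL : 0 ≤ L)
    (hw : M ^ (1 / (p - 1)) * A ^ q + N ^ (1 / (p - 1)) * B ^ q ≤ L ^ (1 / (p - 1))) :
    (A * s + B * t) ^ p ≤ L * (s ^ p / M + t ^ p / N) := by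
  have h := rpow_inner_le_weighted_Lq_mul_weighted_Lp univ hpq
    (A := ![A, B]) (x := ![s, t]) (M := ![M, N])
    (by simp [Fin.forall_fin_two, hA, hB]) (by simp [Fin.forall_fin_two, hs, ht])
    (by simp [Fin.forall_fin_two, hM, hN])
  simp only [Fin.sum_univ_two, Matrix.cons_val_zero, Matrix.cons_val_one] at h
  refine h.trans (mul_le_mul_of_nonneg_right ?_ (by positivity))
  calc (M ^ (1 / (p - 1)) * A ^ q + N ^ (1 / (p - 1)) * B ^ q) ^ (p - 1)
      ≤ (L ^ (1 / (p - 1))) ^ (p - 1) := rpow_le_rpow (by positivity) hw hpq.sub_one_pos.le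
    _ = L := by rw [← rpow_mul hL, one_div_mul_cancel hpq.sub_one_ne_zero, rpow_one]

/-- Theorem 1 (ii): Euler–Lagrange / Bohr type inequality for complex numbers,
case μ < 0, ν > 0, λ < 0. -/
theorem bohr_type_complex_case_ii (x y a b : ℂ) (p q : ℝ) (hp : 1 < p)
    (hpq : 1 / p + 1 / q = 1) (μ ν lam : ℝ) (hμ : μ < 0) (hν : 0 < ν) (hlam : lam < 0)
    (h : |lam| ^ (1 / (p - 1)) ≤
      |μ| ^ (1 / (p - 1)) * ‖a‖ ^ q - |ν| ^ (1 / (p - 1)) * ‖b‖ ^ q) :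
    ‖x‖ ^ p / μ + ‖y‖ ^ p / ν ≥ ‖a * x + b * y‖ ^ p / lam := by
  have hpq' : p.HolderConjugate q := holderConjugate_iff.2 ⟨hp, by simpa only [one_div] using hpq⟩
  rw [abs_of_pos hν] at h
  have hlam' : 0 < |lam| := abs_pos.2 hlam.ne
  have ha : 0 < ‖a‖ := by
    refine (norm_nonneg a).lt_of_ne fun ha ↦ ?_
    rw [← ha, zero_rpow hpq'.symm.ne_zero] at h
    have := rpow_pos_of_pos hlam' (1 / (p - 1))
    have : 0 ≤ ν ^ (1 / (p - 1)) * ‖b‖ ^ q := by positivity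
    linarith
  set u := a * x + b * y with hu
  have htri : ‖a‖ * ‖x‖ ≤ 1 * ‖u‖ + ‖b‖ * ‖y‖ := by
    rw [one_mul, ← norm_mul, ← norm_mul]
    simpa [hu] using norm_sub_le u (b * y)
  have hweights : |lam| ^ (1 / (p - 1)) * 1 ^ q + ν ^ (1 / (p - 1)) * ‖b‖ ^ q ≤
      (|μ| * ‖a‖ ^ p) ^ (1 / (p - 1)) := by
    rw [mul_rpow (abs_nonneg μ) (by positivity), ← rpow_mul ha.le, mul_one_div,
      ← hpq'.conjugate_eq, one_rpow]
    linarith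
  have hkey : (‖a‖ * ‖x‖) ^ p ≤ |μ| * ‖a‖ ^ p * (‖u‖ ^ p / |lam| + ‖y‖ ^ p / ν) :=
    (rpow_le_rpow (by positivity) htri hpq'.pos.le).trans <|
      mul_add_mul_rpow_le hpq' zero_le_one (norm_nonneg b) (norm_nonneg u) (norm_nonneg y)
        hlam' hν (by positivity) hweights
  rw [mul_rpow ha.le (norm_nonneg x), mul_comm |μ|, mul_assoc] at hkey
  have hx := le_of_mul_le_mul_left hkey (rpow_pos_of_pos ha p)
  rw [abs_of_neg hμ, abs_of_neg hlam] at hx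
  have : ‖u‖ ^ p / lam - ‖y‖ ^ p / ν ≤ ‖x‖ ^ p / μ := by
    rw [le_div_iff_of_neg hμ]
    linarith
  linarith
end

section
/- Let x, y, a, b be complex numbers, let p > 1 and q be real numbers with 1/p + 1/q = 1, and let μ, ν, λ be nonzero real numbers with μ > 0, ν < 0 and λ < 0. If |λ|^{1/(p-1)} ≤ −|μ|^{1/(p-1)}·|a|^q + |ν|^{1/(p-1)}·|b|^q, then |x|^p/μ + |y|^p/ν ≥ |a·x + b·y|^p/λ. -/
/-!
Put `w = a x + b y`, so `‖b‖‖y‖ ≤ ‖a‖‖x‖ + ‖w‖`. Hölder with exponents `q, p`, applied to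
`(μ^{1/p}‖a‖)(‖x‖/μ^{1/p}) + |λ|^{1/p}(‖w‖/|λ|^{1/p})`, bounds the right side by
`(μ^{1/(p-1)}‖a‖^q + |λ|^{1/(p-1)})^{1/q} (‖x‖^p/μ + ‖w‖^p/|λ|)^{1/p}`, and the hypothesis bounds
the first factor by `|ν|^{1/p}‖b‖` (it also forces `b ≠ 0`). Cancelling `‖b‖` and raising to the
power `p` gives `‖y‖^p/|ν| ≤ ‖x‖^p/μ + ‖w‖^p/|λ|`, which is the claim since `ν, λ < 0`.
-/

open Real

namespace Real.HolderConjugate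

variable {p q : ℝ}

lemma one_div_mul_conj (hpq : p.HolderConjugate q) : 1 / p * q = 1 / (p - 1) := by
  nth_rw 1 [← hpq.sub_one_mul_conj]
  field_simp [hpq.sub_one_ne_zero, hpq.symm.ne_zero]

lemma one_div_sub_one_mul_one_div_conj (hpq : p.HolderConjugate q) :
    1 / (p - 1) * (1 / q) = 1 / p := by
  rw [one_div_mul_one_div, hpq.sub_one_mul_conj]

end Real.HolderConjugate

section Holder

variable {p q : ℝ}

lemma mul_add_mul_le_Lp_mul_Lq_of_nonneg (hpq : p.HolderConjugate q) {a b c d : ℝ}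
    (ha : 0 ≤ a) (hb : 0 ≤ b) (hc : 0 ≤ c) (hd : 0 ≤ d) :
    a * c + b * d ≤ (a ^ p + b ^ p) ^ (1 / p) * (c ^ q + d ^ q) ^ (1 / q) := by
  simpa [Fin.sum_univ_two] using
    inner_le_Lp_mul_Lq_of_nonneg Finset.univ hpq (f := ![a, b]) (g := ![c, d])
      (by simp [Fin.forall_fin_two, ha, hb]) (by simp [Fin.forall_fin_two, hc, hd])

lemma mul_add_le_weighted_Lq_mul_Lp (hpq : p.HolderConjugate q) {μ l α X W : ℝ}
    (hμ : 0 < μ) (hl : 0 < l) (hα : 0 ≤ α) (hX : 0 ≤ X) (hW : 0 ≤ W) :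
    α * X + W ≤ (μ ^ (1 / (p - 1)) * α ^ q + l ^ (1 / (p - 1))) ^ (1 / q) *
      (X ^ p / μ + W ^ p / l) ^ (1 / p) := by
  have root_pow_p {t : ℝ} (ht : 0 < t) : (t ^ (1 / p)) ^ p = t := by
    rw [one_div, rpow_inv_rpow ht.le hpq.ne_zero]
  have root_pow_q {t : ℝ} (ht : 0 < t) : (t ^ (1 / p)) ^ q = t ^ (1 / (p - 1)) := by
    rw [← rpow_mul ht.le, hpq.one_div_mul_conj]
  have hm : 0 < μ ^ (1 / p) := rpow_pos_of_pos hμ _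
  have hk : 0 < l ^ (1 / p) := rpow_pos_of_pos hl _
  calc α * X + W = (μ ^ (1 / p) * α) * (X / μ ^ (1 / p)) + l ^ (1 / p) * (W / l ^ (1 / p)) := by
        field_simp
    _ ≤ ((μ ^ (1 / p) * α) ^ q + (l ^ (1 / p)) ^ q) ^ (1 / q) *
          ((X / μ ^ (1 / p)) ^ p + (W / l ^ (1 / p)) ^ p) ^ (1 / p) :=
        mul_add_mul_le_Lp_mul_Lq_of_nonneg hpq.symm (by positivity) hk.le (by positivity)
          (by positivity)
    _ = _ := by
        rw [mul_rpow hm.le hα, div_rpow hX hm.le, div_rpow hW hk.le, root_pow_q hμ,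
          root_pow_q hl, root_pow_p hμ, root_pow_p hl]

lemma rpow_div_le_of_mul_le_of_weight_le (hpq : p.HolderConjugate q) {μ ν l α β X Y W : ℝ}
    (hμ : 0 < μ) (hν : 0 < ν) (hl : 0 < l) (hα : 0 ≤ α) (hβ : 0 ≤ β) (hX : 0 ≤ X)
    (hY : 0 ≤ Y) (hW : 0 ≤ W) (htri : β * Y ≤ α * X + W)
    (hweight : l ^ (1 / (p - 1)) ≤ -(μ ^ (1 / (p - 1)) * α ^ q) + ν ^ (1 / (p - 1)) * β ^ q) :
    Y ^ p / ν ≤ X ^ p / μ + W ^ p / l := by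
  set S := X ^ p / μ + W ^ p / l
  have hS : 0 ≤ S := by positivity
  have hβ_pos : 0 < β := by
    refine hβ.lt_of_ne fun hβ0 ↦ ?_
    rw [← hβ0, zero_rpow hpq.symm.ne_zero, mul_zero, add_zero] at hweight
    have : 0 < l ^ (1 / (p - 1)) := rpow_pos_of_pos hl _
    have : 0 ≤ μ ^ (1 / (p - 1)) * α ^ q := by positivity
    linarith
  have hβY : β * Y ≤ β * (ν * S) ^ (1 / p) := calc
    β * Y ≤ α * X + W := htri
    _ ≤ (μ ^ (1 / (p - 1)) * α ^ q + l ^ (1 / (p - 1))) ^ (1 / q) * S ^ (1 / p) :=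
        mul_add_le_weighted_Lq_mul_Lp hpq hμ hl hα hX hW
    _ ≤ (ν ^ (1 / (p - 1)) * β ^ q) ^ (1 / q) * S ^ (1 / p) := by
        gcongr
        · exact hpq.symm.one_div_nonneg
        · linarith
    _ = β * (ν * S) ^ (1 / p) := by
        rw [mul_rpow (by positivity) (by positivity), ← rpow_mul hν.le, ← rpow_mul hβ,
          hpq.one_div_sub_one_mul_one_div_conj, mul_one_div_cancel hpq.symm.ne_zero, rpow_one,
          mul_rpow hν.le hS]
        ring
  have hY_le : Y ≤ (ν * S) ^ p⁻¹ := by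
    rw [← one_div]
    exact le_of_mul_le_mul_left hβY hβ_pos
  rw [div_le_iff₀' hν, ← le_rpow_inv_iff_of_pos hY (by positivity) hpq.pos]
  exact hY_le

end Holder

/-- Theorem 1 (iii): Euler–Lagrange / Bohr type inequality for complex numbers,
case μ > 0, ν < 0, λ < 0. -/
theorem bohr_type_complex_case_iii (x y a b : ℂ) (p q : ℝ) (hp : 1 < p)
    (hpq : 1 / p + 1 / q = 1) (μ ν lam : ℝ) (hμ : 0 < μ) (hν : ν < 0) (hlam : lam < 0)
    (h : |lam| ^ (1 / (p - 1)) ≤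
      -(|μ| ^ (1 / (p - 1)) * ‖a‖ ^ q) + |ν| ^ (1 / (p - 1)) * ‖b‖ ^ q) :
    ‖x‖ ^ p / μ + ‖y‖ ^ p / ν ≥ ‖a * x + b * y‖ ^ p / lam := by
  have hpq' : p.HolderConjugate q :=
    Real.holderConjugate_iff.mpr ⟨hp, by simpa only [one_div] using hpq⟩
  rw [abs_of_pos hμ, abs_of_neg hν, abs_of_neg hlam] at h
  have htri : ‖b‖ * ‖y‖ ≤ ‖a‖ * ‖x‖ + ‖a * x + b * y‖ := calc
    ‖b‖ * ‖y‖ = ‖(a * x + b * y) - a * x‖ := by rw [add_sub_cancel_left, norm_mul]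
    _ ≤ ‖a * x + b * y‖ + ‖a‖ * ‖x‖ := (norm_sub_le _ _).trans_eq (by rw [norm_mul])
    _ = ‖a‖ * ‖x‖ + ‖a * x + b * y‖ := add_comm _ _
  have key := rpow_div_le_of_mul_le_of_weight_le hpq' hμ (neg_pos.2 hν) (neg_pos.2 hlam)
    (norm_nonneg a) (norm_nonneg b) (norm_nonneg x) (norm_nonneg y) (norm_nonneg _) htri h
  rw [div_neg, div_neg] at key
  linarith
end

section
/- (Bohr's inequality as a special case.) Let p > 1 and let s, t be real numbers with 1 < s ≤ 2 and 1/s + 1/t = 1. Then for all nonnegative real numbers x and y, s·x^p + t·y^p ≥ ((s−1)·x + y)^p / ((s−1)·s^{p−2}) ≥ ((s−1)·x + y)^p / 2^{p−2}. -/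
/-!
Writing `(s - 1) x + y = s (x / t + y / s)` with `1 / t + 1 / s = 1`, convexity of `u ↦ u ^ p`
gives `((s - 1) x + y) ^ p ≤ s ^ (p - 1) ((s - 1) x ^ p + y ^ p)`, which is the first inequality
after substituting `t = s / (s - 1)`. The second reduces to `(s - 1) s ^ (p - 2) ≤ 2 ^ (p - 2)`,
which follows from `s - 1 ≤ s / 2` and `s ^ (p - 1) ≤ 2 ^ (p - 1)`.
-/

open Real

lemma rpow_weighted_add_le {p a b x y : ℝ} (hp : 1 ≤ p) (ha : 0 ≤ a) (hb : 0 ≤ b)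
    (hab : 0 < a + b) (hx : 0 ≤ x) (hy : 0 ≤ y) :
    (a * x + b * y) ^ p ≤ (a + b) ^ (p - 1) * (a * x ^ p + b * y ^ p) := by
  set c := a + b
  have hconv : (a / c * x + b / c * y) ^ p ≤ a / c * x ^ p + b / c * y ^ p :=
    (convexOn_rpow hp).2 hx hy (by positivity) (by positivity) (by rw [← add_div, div_self hab.ne'])
  calc (a * x + b * y) ^ p = c ^ p * (a / c * x + b / c * y) ^ p := by
        rw [← mul_rpow hab.le (by positivity)]
        field_simp
    _ ≤ c ^ p * (a / c * x ^ p + b / c * y ^ p) := by gcongr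
    _ = c ^ (p - 1) * (a * x ^ p + b * y ^ p) := by
        rw [rpow_sub_one hab.ne']
        field_simp

lemma rpow_sub_one_mul_add_le_of_holderConjugate {p s t x y : ℝ} (hp : 1 ≤ p)
    (hst : s.HolderConjugate t) (hx : 0 ≤ x) (hy : 0 ≤ y) :
    ((s - 1) * x + y) ^ p ≤ (s - 1) * s ^ (p - 2) * (s * x ^ p + t * y ^ p) := by
  have hs1 : 0 < s - 1 := sub_pos.2 hst.lt
  have hs : 0 < s := hst.pos
  calc ((s - 1) * x + y) ^ p = ((s - 1) * x + 1 * y) ^ p := by rw [one_mul]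
    _ ≤ (s - 1 + 1) ^ (p - 1) * ((s - 1) * x ^ p + 1 * y ^ p) :=
        rpow_weighted_add_le hp hs1.le zero_le_one (by linarith) hx hy
    _ = (s - 1) * s ^ (p - 2) * (s * x ^ p + t * y ^ p) := by
        rw [hst.conjugate_eq, sub_add_cancel, show p - 1 = p - 2 + 1 by ring,
          rpow_add_one hs.ne']
        field_simp

lemma sub_one_mul_rpow_le_two_rpow {s q : ℝ} (hs : 0 < s) (hs2 : s ≤ 2) (hq : -1 ≤ q) :
    (s - 1) * s ^ q ≤ 2 ^ q :=
  calc (s - 1) * s ^ q ≤ s / 2 * s ^ q := by gcongr; linarith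
    _ = s ^ (q + 1) / 2 := by rw [rpow_add_one hs.ne']; ring
    _ ≤ 2 ^ (q + 1) / 2 := by gcongr; linarith
    _ = 2 ^ q := by rw [rpow_add_one two_ne_zero]; ring

/-- Bohr's inequality as a special case of Theorem 1. -/
theorem bohr_inequality (p s t : ℝ) (hp : 1 < p) (hs : 1 < s) (hs2 : s ≤ 2)
    (hst : 1 / s + 1 / t = 1) (x y : ℝ) (hx : 0 ≤ x) (hy : 0 ≤ y) :
    s * x ^ p + t * y ^ p ≥ ((s - 1) * x + y) ^ p / ((s - 1) * s ^ (p - 2)) ∧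
    ((s - 1) * x + y) ^ p / ((s - 1) * s ^ (p - 2)) ≥ ((s - 1) * x + y) ^ p / 2 ^ (p - 2) := by
  have hholder : s.HolderConjugate t := holderConjugate_iff.2 ⟨hs, by simpa using hst⟩
  have hs0 : 0 < s := hholder.pos
  have hc : 0 < (s - 1) * s ^ (p - 2) := by
    have := sub_pos.2 hs
    positivity
  constructor
  · rw [ge_iff_le, div_le_iff₀' hc]
    exact rpow_sub_one_mul_add_le_of_holderConjugate hp.le hholder hx hy
  · exact div_le_div_of_nonneg_left (by positivity) hc
      (sub_one_mul_rpow_le_two_rpow hs0 hs2 (by linarith))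
end

section
/- Let n ≥ 2 be an integer, let x_1,…,x_n and a_1,…,a_n be complex numbers, let p > 1 and q be real numbers with 1/p + 1/q = 1, and let μ_1,…,μ_n be nonzero real numbers with μ_1 > 0 and μ_i < 0 for i = 2,…,n, and let λ > 0. If λ^{1/(p-1)} ≤ |μ_1|^{1/(p-1)}·|a_1|^q − Σ_{i=2}^n |μ_i|^{1/(p-1)}·|a_i|^q, then Σ_{i=1}^n |x_i|^p/μ_i ≤ |Σ_{i=1}^n a_i·x_i|^p / λ. -/
/-!
Write `a₁ x₁ = S - ∑_{i ≥ 2} aᵢ xᵢ` with `S = ∑ aᵢ xᵢ` and apply Hölder's inequality with weights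
`λ` on `S` and `|μᵢ|` on the other terms:
`|a₁ x₁|^p ≤ (λ^{1/(p-1)} + ∑_{i ≥ 2} |μᵢ|^{1/(p-1)} |aᵢ|^q)^{p-1}
  (|S|^p/λ + ∑_{i ≥ 2} |xᵢ|^p/|μᵢ|)`.
By hypothesis the first factor is at most `μ₁ |a₁|^p` (in particular `a₁ ≠ 0`); dividing by it
and moving the terms with `i ≥ 2` to the left gives the inequality.
-/

open Finset Real

section

variable {ι : Type*} {s : Finset ι} {p q : ℝ}

theorem rpow_inner_le_weighted_Lq_mul_Lp (hpq : p.HolderConjugate q) {w y c : ι → ℝ}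
    (hw : ∀ i ∈ s, 0 ≤ w i) (hy : ∀ i ∈ s, 0 ≤ y i) (hc : ∀ i ∈ s, 0 < c i) :
    (∑ i ∈ s, w i * y i) ^ p ≤
      (∑ i ∈ s, c i ^ (1 / (p - 1)) * w i ^ q) ^ (p - 1) * ∑ i ∈ s, y i ^ p / c i := by
  have hqp : q / p = 1 / (p - 1) := by
    rw [div_eq_div_iff hpq.ne_zero hpq.sub_one_ne_zero, one_mul, mul_comm, hpq.sub_one_mul_conj]
  have holder := inner_le_Lp_mul_Lq_of_nonneg s hpq (f := fun i => y i / c i ^ (1 / p))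
    (g := fun i => w i * c i ^ (1 / p))
    (fun i hi => div_nonneg (hy i hi) (rpow_nonneg (hc i hi).le _))
    (fun i hi => mul_nonneg (hw i hi) (rpow_nonneg (hc i hi).le _))
  have hfg : ∑ i ∈ s, y i / c i ^ (1 / p) * (w i * c i ^ (1 / p)) = ∑ i ∈ s, w i * y i :=
    sum_congr rfl fun i hi => by
      have := (rpow_pos_of_pos (hc i hi) (1 / p)).ne'
      field_simp
  have hf : ∑ i ∈ s, (y i / c i ^ (1 / p)) ^ p = ∑ i ∈ s, y i ^ p / c i :=
    sum_congr rfl fun i hi => by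
      rw [div_rpow (hy i hi) (rpow_nonneg (hc i hi).le _), ← rpow_mul (hc i hi).le,
        one_div_mul_cancel hpq.ne_zero, rpow_one]
  have hg : ∑ i ∈ s, (w i * c i ^ (1 / p)) ^ q = ∑ i ∈ s, c i ^ (1 / (p - 1)) * w i ^ q :=
    sum_congr rfl fun i hi => by
      rw [mul_rpow (hw i hi) (rpow_nonneg (hc i hi).le _), ← rpow_mul (hc i hi).le,
        one_div_mul_eq_div, hqp, mul_comm]
  rw [hfg, hf, hg] at holder
  have hA : 0 ≤ ∑ i ∈ s, y i ^ p / c i :=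
    sum_nonneg fun i hi => div_nonneg (rpow_nonneg (hy i hi) _) (hc i hi).le
  have hB : 0 ≤ ∑ i ∈ s, c i ^ (1 / (p - 1)) * w i ^ q :=
    sum_nonneg fun i hi => mul_nonneg (rpow_nonneg (hc i hi).le _) (rpow_nonneg (hw i hi) _)
  calc (∑ i ∈ s, w i * y i) ^ p
      ≤ ((∑ i ∈ s, y i ^ p / c i) ^ (1 / p) *
          (∑ i ∈ s, c i ^ (1 / (p - 1)) * w i ^ q) ^ (1 / q)) ^ p :=
        rpow_le_rpow (sum_nonneg fun i hi => mul_nonneg (hw i hi) (hy i hi)) holder hpq.nonneg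
    _ = _ := by
        rw [mul_rpow (rpow_nonneg hA _) (rpow_nonneg hB _), ← rpow_mul hA, ← rpow_mul hB,
          one_div_mul_cancel hpq.ne_zero, rpow_one, one_div_mul_eq_div,
          hpq.div_conj_eq_sub_one, mul_comm]

theorem norm_sum_mul_rpow_le_weighted {R : Type*} [SeminormedRing R] (hpq : p.HolderConjugate q)
    (a x : ι → R) {c : ι → ℝ} (hc : ∀ i ∈ s, 0 < c i) :
    ‖∑ i ∈ s, a i * x i‖ ^ p ≤
      (∑ i ∈ s, c i ^ (1 / (p - 1)) * ‖a i‖ ^ q) ^ (p - 1) * ∑ i ∈ s, ‖x i‖ ^ p / c i :=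
  calc ‖∑ i ∈ s, a i * x i‖ ^ p ≤ (∑ i ∈ s, ‖a i‖ * ‖x i‖) ^ p :=
        rpow_le_rpow (norm_nonneg _)
          ((norm_sum_le _ _).trans (sum_le_sum fun _ _ => norm_mul_le _ _)) hpq.nonneg
    _ ≤ _ := rpow_inner_le_weighted_Lq_mul_Lp hpq (fun _ _ => norm_nonneg _)
        (fun _ _ => norm_nonneg _) hc

theorem norm_add_sum_mul_rpow_le_weighted {R : Type*} [SeminormedRing R] [NormOneClass R]
    (hpq : p.HolderConjugate q) (z : R) (a x : ι → R) {c₀ : ℝ} (hc₀ : 0 < c₀) {c : ι → ℝ}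
    (hc : ∀ i ∈ s, 0 < c i) :
    ‖z + ∑ i ∈ s, a i * x i‖ ^ p ≤
      (c₀ ^ (1 / (p - 1)) + ∑ i ∈ s, c i ^ (1 / (p - 1)) * ‖a i‖ ^ q) ^ (p - 1) *
        (‖z‖ ^ p / c₀ + ∑ i ∈ s, ‖x i‖ ^ p / c i) := by
  have := norm_sum_mul_rpow_le_weighted hpq (s := insertNone s) (fun i => i.elim 1 a)
    (fun i => i.elim z x) (c := fun i => i.elim c₀ c)
    (by rintro (_ | i) hi; exacts [hc₀, hc i (some_mem_insertNone.1 hi)])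
  simpa only [sum_insertNone, Option.elim, norm_one, one_rpow, mul_one, one_mul] using this

theorem rpow_one_div_sub_one_mul_rpow_rpow_sub_one (hpq : p.HolderConjugate q) {m b : ℝ}
    (hm : 0 ≤ m) (hb : 0 ≤ b) : (m ^ (1 / (p - 1)) * b ^ q) ^ (p - 1) = m * b ^ p := by
  rw [mul_rpow (rpow_nonneg hm _) (rpow_nonneg hb _), ← rpow_mul hm, ← rpow_mul hb,
    one_div_mul_cancel hpq.sub_one_ne_zero, rpow_one, mul_comm q, hpq.sub_one_mul_conj]

theorem sum_norm_rpow_div_le_norm_sum_mul_rpow_div [DecidableEq ι] {R : Type*}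
    [NormedDivisionRing R] (hpq : p.HolderConjugate q) {i₀ : ι} (hi₀ : i₀ ∈ s) (a x : ι → R)
    {μ : ι → ℝ} (hμ₀ : 0 < μ i₀) (hμ : ∀ i ∈ s, i ≠ i₀ → μ i < 0) {lam : ℝ} (hlam : 0 < lam)
    (h : lam ^ (1 / (p - 1)) ≤ |μ i₀| ^ (1 / (p - 1)) * ‖a i₀‖ ^ q -
      ∑ i ∈ s.erase i₀, |μ i| ^ (1 / (p - 1)) * ‖a i‖ ^ q) :
    ∑ i ∈ s, ‖x i‖ ^ p / μ i ≤ ‖∑ i ∈ s, a i * x i‖ ^ p / lam := by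
  set S := ∑ i ∈ s, a i * x i
  set W := lam ^ (1 / (p - 1)) + ∑ i ∈ s.erase i₀, |μ i| ^ (1 / (p - 1)) * ‖a i‖ ^ q
  set T := ‖S‖ ^ p / lam + ∑ i ∈ s.erase i₀, ‖x i‖ ^ p / |μ i|
  have hμ' : ∀ i ∈ s.erase i₀, 0 < |μ i| := fun i hi =>
    abs_pos_of_neg (hμ i (mem_of_mem_erase hi) (ne_of_mem_erase hi))
  have hW : 0 < W := add_pos_of_pos_of_nonneg (rpow_pos_of_pos hlam _)
    (sum_nonneg fun i hi =>
      mul_nonneg (rpow_nonneg (hμ' i hi).le _) (rpow_nonneg (norm_nonneg _) _))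
  have holder : ‖a i₀‖ ^ p * ‖x i₀‖ ^ p ≤ W ^ (p - 1) * T := by
    have hsplit : a i₀ * x i₀ = S - ∑ i ∈ s.erase i₀, a i * x i :=
      eq_sub_of_add_eq (add_sum_erase s (fun i => a i * x i) hi₀)
    have := norm_add_sum_mul_rpow_le_weighted hpq S (fun i => -a i) x hlam hμ'
    simp only [neg_mul, sum_neg_distrib, ← sub_eq_add_neg, ← hsplit, norm_neg] at this
    rwa [norm_mul, mul_rpow (norm_nonneg _) (norm_nonneg _)] at this
  have hWpow : W ^ (p - 1) ≤ μ i₀ * ‖a i₀‖ ^ p := by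
    rw [← abs_of_pos hμ₀,
      ← rpow_one_div_sub_one_mul_rpow_rpow_sub_one hpq (abs_nonneg _) (norm_nonneg _)]
    exact rpow_le_rpow hW.le (by linarith) hpq.sub_one_pos.le
  have ha : 0 < ‖a i₀‖ ^ p :=
    pos_of_mul_pos_right ((rpow_pos_of_pos hW _).trans_le hWpow) hμ₀.le
  have hT : 0 ≤ T := add_nonneg (div_nonneg (rpow_nonneg (norm_nonneg _) _) hlam.le)
    (sum_nonneg fun i hi => div_nonneg (rpow_nonneg (norm_nonneg _) _) (hμ' i hi).le)
  have key : ‖x i₀‖ ^ p / μ i₀ ≤ T := by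
    rw [div_le_iff₀ hμ₀]
    refine le_of_mul_le_mul_left ?_ ha
    calc ‖a i₀‖ ^ p * ‖x i₀‖ ^ p ≤ W ^ (p - 1) * T := holder
      _ ≤ μ i₀ * ‖a i₀‖ ^ p * T := mul_le_mul_of_nonneg_right hWpow hT
      _ = ‖a i₀‖ ^ p * (T * μ i₀) := by ring
  have hneg : ∑ i ∈ s.erase i₀, ‖x i‖ ^ p / μ i = -∑ i ∈ s.erase i₀, ‖x i‖ ^ p / |μ i| := by
    rw [← sum_neg_distrib]
    refine sum_congr rfl fun i hi => ?_
    rw [abs_of_neg (hμ i (mem_of_mem_erase hi) (ne_of_mem_erase hi)), div_neg, neg_neg]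
  rw [← add_sum_erase s _ hi₀, hneg]
  linarith

end

open Finset in
/-- Theorem 2, Case (ii): n-term (n ≥ 2, here n + 2 indices) Bohr type inequality for
complex numbers with μ_1 > 0, μ_i < 0 for i ≥ 2 and λ > 0. -/
theorem bohr_type_complex_n_case_ii (n : ℕ) (x a : Fin (n + 2) → ℂ) (p q : ℝ)
    (hp : 1 < p) (hpq : 1 / p + 1 / q = 1) (μ : Fin (n + 2) → ℝ)
    (hμ1 : 0 < μ 0) (hμi : ∀ i, i ≠ 0 → μ i < 0) (lam : ℝ) (hlam : 0 < lam)
    (h : lam ^ (1 / (p - 1)) ≤ |μ 0| ^ (1 / (p - 1)) * ‖a 0‖ ^ q -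
      ∑ i ∈ univ.erase 0, |μ i| ^ (1 / (p - 1)) * ‖a i‖ ^ q) :
    ∑ i, ‖x i‖ ^ p / μ i ≤ ‖∑ i, a i * x i‖ ^ p / lam := by
  have hconj : p.HolderConjugate q :=
    holderConjugate_iff.2 ⟨hp, by simpa only [one_div] using hpq⟩
  exact sum_norm_rpow_div_le_norm_sum_mul_rpow_div hconj (mem_univ 0) a x hμ1
    (fun i _ hi => hμi i hi) hlam h
end

section
/- Let f : (0,∞) → (0,∞) be a strictly increasing convex bijection of (0,∞) onto (0,∞) whose inverse f⁻¹ satisfies f⁻¹(A·B) ≥ f⁻¹(A)·f⁻¹(B) for all A, B > 0. Let n be a positive integer, and let μ_1,…,μ_n and Q_1,…,Q_n be positive real numbers. Define a_i = Q_i·f⁻¹(1/(μ_i·Q_i)) / (Σ_{j=1}^n Q_j) for i = 1,…,n. Then for all positive real numbers x_1,…,x_n, Σ_{i=1}^n f(x_i)/μ_i ≥ (Σ_{j=1}^n Q_j)·f(Σ_{i=1}^n a_i·x_i). -/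
/-!
Put `z i = g (1 / (μ i * Q i)) * x i`, so that `∑ i, a i * x i` is the barycentre of the `z i`
with weights `Q i`. Jensen's inequality bounds `(∑ j, Q j) * f (∑ i, a i * x i)` by
`∑ i, Q i * f (z i)`, and supermultiplicativity of `g = f⁻¹` gives `z i ≤ g (f (x i) / (μ i * Q i))`,
hence `Q i * f (z i) ≤ f (x i) / μ i` by monotonicity of `f`.
-/

open Finset

theorem ConvexOn.sum_mul_map_centerMass_le {ι : Type*} {s : Set ℝ} {f : ℝ → ℝ}
    (hf : ConvexOn ℝ s f) {t : Finset ι} {w p : ι → ℝ} (hw : ∀ i ∈ t, 0 ≤ w i)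
    (hp : ∀ i ∈ t, p i ∈ s) :
    (∑ i ∈ t, w i) * f (t.centerMass w p) ≤ ∑ i ∈ t, w i * f (p i) := by
  rcases (sum_nonneg hw).eq_or_lt with hzero | hpos
  · have hw0 : ∀ i ∈ t, w i = 0 := (sum_eq_zero_iff_of_nonneg hw).1 hzero.symm
    rw [← hzero, zero_mul, sum_eq_zero fun i hi => by rw [hw0 i hi, zero_mul]]
  · calc (∑ i ∈ t, w i) * f (t.centerMass w p)
        ≤ (∑ i ∈ t, w i) * t.centerMass w (f ∘ p) :=
          mul_le_mul_of_nonneg_left (hf.map_centerMass_le hw hpos hp) hpos.le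
      _ = ∑ i ∈ t, w i * f (p i) := by
          simp only [centerMass, smul_eq_mul, Function.comp, ← mul_assoc,
            mul_inv_cancel₀ hpos.ne', one_mul]

theorem apply_mul_le_of_supmul_inverse {f g : ℝ → ℝ}
    (hf_pos : ∀ x, 0 < x → 0 < f x) (hf_mono : MonotoneOn f (Set.Ioi 0))
    (hg_pos : ∀ y, 0 < y → 0 < g y)
    (hgf : ∀ x, 0 < x → g (f x) = x) (hfg : ∀ y, 0 < y → f (g y) = y)
    (hg_supmul : ∀ A B, 0 < A → 0 < B → g A * g B ≤ g (A * B))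
    {c x : ℝ} (hc : 0 < c) (hx : 0 < x) :
    f (g c * x) ≤ c * f x := by
  have hcfx : 0 < c * f x := mul_pos hc (hf_pos x hx)
  have hle : g c * x ≤ g (c * f x) := by
    simpa only [hgf x hx] using hg_supmul c (f x) hc (hf_pos x hx)
  calc f (g c * x) ≤ f (g (c * f x)) :=
        hf_mono (mul_pos (hg_pos c hc) hx) (hg_pos _ hcfx) hle
    _ = c * f x := hfg _ hcfx

theorem convex_bohr_type_general_general (f g : ℝ → ℝ)
    (hf_pos : ∀ x, 0 < x → 0 < f x)
    (hf_mono : StrictMonoOn f (Set.Ioi 0))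
    (hf_conv : ConvexOn ℝ (Set.Ioi 0) f)
    (hg_pos : ∀ y, 0 < y → 0 < g y)
    (hgf : ∀ x, 0 < x → g (f x) = x)
    (hfg : ∀ y, 0 < y → f (g y) = y)
    (hg_supmul : ∀ A B, 0 < A → 0 < B → g A * g B ≤ g (A * B))
    (n : ℕ) (μ Q : Fin n → ℝ) (hμ : ∀ i, 0 < μ i) (hQ : ∀ i, 0 < Q i)
    (a : Fin n → ℝ) (ha : ∀ i, a i = Q i * g (1 / (μ i * Q i)) / ∑ j, Q j)
    (x : Fin n → ℝ) (hx : ∀ i, 0 < x i) :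
    ∑ i, f (x i) / μ i ≥ (∑ j, Q j) * f (∑ i, a i * x i) := by
  set c : Fin n → ℝ := fun i => 1 / (μ i * Q i)
  have hc : ∀ i, 0 < c i := fun i => one_div_pos.2 (mul_pos (hμ i) (hQ i))
  set z : Fin n → ℝ := fun i => g (c i) * x i
  have hbary : ∑ i, a i * x i = univ.centerMass Q z := by
    simp only [centerMass, ha, smul_eq_mul, mul_sum, z, c]
    exact sum_congr rfl fun i _ => by ring
  calc (∑ j, Q j) * f (∑ i, a i * x i) = (∑ j, Q j) * f (univ.centerMass Q z) := by rw [hbary]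
    _ ≤ ∑ i, Q i * f (z i) :=
        hf_conv.sum_mul_map_centerMass_le (fun i _ => (hQ i).le)
          fun i _ => mul_pos (hg_pos _ (hc i)) (hx i)
    _ ≤ ∑ i, Q i * (c i * f (x i)) := by
        gcongr with i
        · exact (hQ i).le
        · exact apply_mul_le_of_supmul_inverse hf_pos hf_mono.monotoneOn hg_pos hgf hfg
            hg_supmul (hc i) (hx i)
    _ = ∑ i, f (x i) / μ i := sum_congr rfl fun i _ => by
        simp only [c]
        field_simp [(hμ i).ne', (hQ i).ne']

open Finset in
/-- The general convexity argument of Theorem 2: if f is a positive, strictly increasing,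
convex bijection of (0,∞) onto (0,∞) with inverse g satisfying g(A·B) ≥ g(A)·g(B),
then with a_i = Q_i·g(1/(μ_i·Q_i))/Σ_j Q_j we have
Σ_i f(x_i)/μ_i ≥ (Σ_j Q_j)·f(Σ_i a_i·x_i). -/
theorem convex_bohr_type_general (f g : ℝ → ℝ)
    (hf_pos : ∀ x, 0 < x → 0 < f x)
    (hf_mono : StrictMonoOn f (Set.Ioi 0))
    (hf_conv : ConvexOn ℝ (Set.Ioi 0) f)
    (hg_pos : ∀ y, 0 < y → 0 < g y)
    (hgf : ∀ x, 0 < x → g (f x) = x)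
    (hfg : ∀ y, 0 < y → f (g y) = y)
    (hg_supmul : ∀ A B, 0 < A → 0 < B → g A * g B ≤ g (A * B))
    (n : ℕ) (hn : 0 < n) (μ Q : Fin n → ℝ) (hμ : ∀ i, 0 < μ i) (hQ : ∀ i, 0 < Q i)
    (a : Fin n → ℝ) (ha : ∀ i, a i = Q i * g (1 / (μ i * Q i)) / ∑ j, Q j)
    (x : Fin n → ℝ) (hx : ∀ i, 0 < x i) :
    ∑ i, f (x i) / μ i ≥ (∑ j, Q j) * f (∑ i, a i * x i) :=
  convex_bohr_type_general_general f g hf_pos hf_mono hf_conv hg_pos hgf hfg hg_supmul n μ Q hμ hQ a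
    ha x hx
end

section
/- Let n be a positive integer, let x_1,…,x_n be nonnegative real numbers, let a_1,…,a_n and μ_1,…,μ_n be positive real numbers, let p ≥ 2, and let q satisfy 1/p + 1/q = 1. Set S = Σ_{j=1}^n μ_j^{1/(p-1)}·a_j^q. Then Σ_{i=1}^n x_i^p/μ_i ≥ (Σ_{i=1}^n a_i·x_i)^p / S^{p-1} + (1/S^p)·Σ_{i=1}^n μ_i^{1/(p-1)}·a_i^q·| (1/(a_i·μ_i))^{1/(p-1)}·S·x_i − Σ_{j=1}^n a_j·x_j |^p. -/
open Finset Real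

lemma rpow_split {r : ℝ} (hr : 1 ≤ r) {w : ℝ} (hw : 0 ≤ w) : w ^ r = w * w ^ (r - 1) := by
  have h : r = 1 + (r - 1) := by ring
  rw [h, Real.rpow_add' hw (by simpa using (lt_of_lt_of_le one_pos hr).ne'), Real.rpow_one]
  ring_nf

/-- superadditivity of rpow -/
lemma superadd_rpow {r : ℝ} (hr : 1 ≤ r) {u v : ℝ} (hu : 0 ≤ u) (hv : 0 ≤ v) :
    u ^ r + v ^ r ≤ (u + v) ^ r := by
  have huv : 0 ≤ u + v := add_nonneg hu hv
  have h1 : u ^ r ≤ u * (u + v) ^ (r - 1) := by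
    rw [rpow_split hr hu]
    exact mul_le_mul_of_nonneg_left
      (Real.rpow_le_rpow hu (le_add_of_nonneg_right hv) (by linarith)) hu
  have h2 : v ^ r ≤ v * (u + v) ^ (r - 1) := by
    rw [rpow_split hr hv]
    exact mul_le_mul_of_nonneg_left
      (Real.rpow_le_rpow hv (le_add_of_nonneg_left hu) (by linarith)) hv
  calc u ^ r + v ^ r ≤ (u + v) * (u + v) ^ (r - 1) := by linarith [h1, h2]; 
    _ = (u + v) ^ r := (rpow_split hr huv).symm

/-- pointwise superquadratic inequality for rpow, p ≥ 2 -/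
lemma sq_key {p : ℝ} (hp : 2 ≤ p) {m t : ℝ} (hm : 0 ≤ m) (ht : 0 ≤ t) :
    m ^ p + p * m ^ (p - 1) * (t - m) + |t - m| ^ p ≤ t ^ p := by
  have hp1 : (1:ℝ) ≤ p - 1 := by linarith
  have hp0 : (1:ℝ) ≤ p := by linarith
  rcases le_total m t with hmt | hmt
  · -- t ≥ m : G u = u^p - p*m^(p-1)*u - (u-m)^p monotone on Ici m
    set G : ℝ → ℝ := fun u => u ^ p - p * m ^ (p - 1) * u - (u - m) ^ p with hG
    have hmono : MonotoneOn G (Set.Ici m) := by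
      apply monotoneOn_of_deriv_nonneg (convex_Ici m)
      · apply ContinuousOn.sub
        apply ContinuousOn.sub
        · exact (Real.continuous_rpow_const (by linarith)).continuousOn
        · exact (continuous_const.mul continuous_id).continuousOn
        · exact ((Real.continuous_rpow_const (by linarith)).comp
            (continuous_id.sub continuous_const)).continuousOn
      · intro u hu
        rw [interior_Ici] at hu
        have hu0 : u ≠ 0 := by
          have : 0 < u := lt_of_le_of_lt hm hu
          exact this.ne'
        exact (((Real.differentiableAt_rpow_const_of_ne p hu0).sub
          ((differentiableAt_const _).mul differentiableAt_id)).sub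
          (((differentiableAt_id.sub (differentiableAt_const m)).rpow_const
            (Or.inr hp0)))).differentiableWithinAt
      · intro u hu
        rw [interior_Ici] at hu
        have hu0 : (0:ℝ) < u := lt_of_le_of_lt hm hu
        have h1 : HasDerivAt (fun u : ℝ => u ^ p) (p * u ^ (p - 1)) u :=
          Real.hasDerivAt_rpow_const (Or.inl hu0.ne')
        have h2 : HasDerivAt (fun u : ℝ => (u - m) ^ p) (p * (u - m) ^ (p - 1)) u := by
          have := ((hasDerivAt_id u).sub_const m).rpow_const (p := p) (Or.inr hp0)
          simpa using this
        have h3 : HasDerivAt G (p * u ^ (p - 1) - p * m ^ (p - 1) * 1 -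
            p * (u - m) ^ (p - 1)) u :=
          (h1.sub ((hasDerivAt_id u).const_mul (p * m ^ (p - 1)))).sub h2
        rw [h3.deriv]
        have hsup : m ^ (p - 1) + (u - m) ^ (p - 1) ≤ u ^ (p - 1) := by
          have := superadd_rpow hp1 hm (sub_nonneg.2 hu.le)
          simpa using this
        have hpp : (0:ℝ) < p := by linarith
        nlinarith [hsup]
    have := hmono (Set.self_mem_Ici) (Set.mem_Ici.2 hmt) hmt
    simp only [hG] at this
    rw [abs_of_nonneg (sub_nonneg.2 hmt)]
    have hzero : (m - m : ℝ) ^ p = 0 := by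
      rw [sub_self, Real.zero_rpow (by positivity)]
    nlinarith [this, hzero]
  · -- t ≤ m : H u = u^p + p*m^(p-1)*(m-u) - (m-u)^p antitone on Icc 0 m
    set H : ℝ → ℝ := fun u => u ^ p + p * m ^ (p - 1) * (m - u) - (m - u) ^ p with hH
    have hanti : AntitoneOn H (Set.Icc 0 m) := by
      apply antitoneOn_of_deriv_nonpos (convex_Icc 0 m)
      · apply ContinuousOn.sub
        apply ContinuousOn.add
        · exact (Real.continuous_rpow_const (by linarith)).continuousOn
        · exact (continuous_const.mul (continuous_const.sub continuous_id)).continuousOn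
        · exact ((Real.continuous_rpow_const (by linarith)).comp
            (continuous_const.sub continuous_id)).continuousOn
      · intro u hu
        rw [interior_Icc] at hu
        exact (((Real.differentiableAt_rpow_const_of_ne p hu.1.ne').add
          ((differentiableAt_const _).mul ((differentiableAt_const m).sub differentiableAt_id))).sub
          ((((differentiableAt_const m).sub differentiableAt_id).rpow_const
            (Or.inr hp0)))).differentiableWithinAt
      · intro u hu
        rw [interior_Icc] at hu
        have h1 : HasDerivAt (fun u : ℝ => u ^ p) (p * u ^ (p - 1)) u :=
          Real.hasDerivAt_rpow_const (Or.inl hu.1.ne')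
        have h2 : HasDerivAt (fun u : ℝ => (m - u) ^ p) (-(p * (m - u) ^ (p - 1))) u := by
          have := (((hasDerivAt_id u).const_sub m)).rpow_const (p := p) (Or.inr hp0)
          simpa using this
        have h2' : HasDerivAt (fun u : ℝ => m - u) (-1 : ℝ) u := by
          simpa using (hasDerivAt_id u).const_sub m
        have h3 : HasDerivAt H (p * u ^ (p - 1) + p * m ^ (p - 1) * (-1) -
            -(p * (m - u) ^ (p - 1))) u :=
          (h1.add (h2'.const_mul (p * m ^ (p - 1)))).sub h2
        rw [h3.deriv]
        have hsup : u ^ (p - 1) + (m - u) ^ (p - 1) ≤ m ^ (p - 1) := by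
          have := superadd_rpow hp1 hu.1.le (sub_nonneg.2 hu.2.le)
          simpa using this
        have hpp : (0:ℝ) < p := by linarith
        nlinarith [hsup]
    have := hanti (Set.mem_Icc.2 ⟨ht, hmt⟩) (Set.mem_Icc.2 ⟨hm, le_refl m⟩) hmt
    simp only [hH] at this
    rw [abs_of_nonpos (sub_nonpos.2 hmt)]
    have hzero : (m - m : ℝ) ^ p = 0 := by
      rw [sub_self, Real.zero_rpow (by positivity)]
    have hneg : -(t - m) = m - t := by ring
    rw [hneg]
    nlinarith [this, hzero]

open Finset in
/-- Theorem 3: superquadratic refinement of the n-term Bohr type inequality for p ≥ 2. -/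
theorem euler_lagrange_superquadratic (n : ℕ) (hn : 0 < n) (x : Fin n → ℝ)
    (hx : ∀ i, 0 ≤ x i) (a μ : Fin n → ℝ) (ha : ∀ i, 0 < a i) (hμ : ∀ i, 0 < μ i)
    (p q : ℝ) (hp : 2 ≤ p) (hpq : 1 / p + 1 / q = 1)
    (S : ℝ) (hS : S = ∑ j, μ j ^ (1 / (p - 1)) * a j ^ q) :
    ∑ i, x i ^ p / μ i ≥ (∑ i, a i * x i) ^ p / S ^ (p - 1) +
      (1 / S ^ p) * ∑ i, μ i ^ (1 / (p - 1)) * a i ^ q *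
        |(1 / (a i * μ i)) ^ (1 / (p - 1)) * S * x i - ∑ j, a j * x j| ^ p := by
  have hp1 : (0:ℝ) < p - 1 := by linarith
  have hppos : (0:ℝ) < p := by linarith
  have h1q : 1 / q = (p - 1) / p := by
    have e : (p - 1) / p = 1 - 1 / p := by field_simp
    rw [e]; linarith
  have hq : q = p / (p - 1) := by
    rw [← one_div_one_div q, h1q, one_div_div]
  have hqpos : 0 < q := by rw [hq]; exact div_pos hppos hp1
  -- positivity of S
  have hSpos : 0 < S := by
    rw [hS]
    apply Finset.sum_pos
    · intro i _
      exact mul_pos (Real.rpow_pos_of_pos (hμ i) _) (Real.rpow_pos_of_pos (ha i) _)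
    · exact univ_nonempty_iff.mpr (Fin.pos_iff_nonempty.mp hn)
  set M : ℝ := ∑ j, a j * x j with hM_def
  have hM : 0 ≤ M := Finset.sum_nonneg fun i _ => mul_nonneg (ha i).le (hx i)
  have hc1 : q - 1 / (p - 1) = 1 := by rw [hq]; field_simp
  have hinv : ∀ i, (1 / (a i * μ i)) ^ (1 / (p - 1))
      = a i ^ (-(1 / (p - 1))) * μ i ^ (-(1 / (p - 1))) := by
    intro i
    rw [one_div, Real.inv_rpow (mul_pos (ha i) (hμ i)).le, Real.mul_rpow (ha i).le (hμ i).le, mul_inv,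
      ← Real.rpow_neg (ha i).le, ← Real.rpow_neg (hμ i).le]
  -- identity 2 : w i * T i = S * (a i * x i)
  have id2 : ∀ i, μ i ^ (1 / (p - 1)) * a i ^ q *
      ((1 / (a i * μ i)) ^ (1 / (p - 1)) * S * x i) = S * (a i * x i) := by
    intro i
    rw [hinv i]
    have e1 : a i ^ q * a i ^ (-(1 / (p - 1))) = a i := by
      rw [← Real.rpow_add (ha i), ← sub_eq_add_neg, hc1, Real.rpow_one]
    have e2 : μ i ^ (1 / (p - 1)) * μ i ^ (-(1 / (p - 1))) = 1 := by
      rw [← Real.rpow_add (hμ i), add_neg_cancel, Real.rpow_zero]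
    calc μ i ^ (1 / (p - 1)) * a i ^ q *
        (a i ^ (-(1 / (p - 1))) * μ i ^ (-(1 / (p - 1))) * S * x i)
        = (a i ^ q * a i ^ (-(1 / (p - 1)))) *
          (μ i ^ (1 / (p - 1)) * μ i ^ (-(1 / (p - 1)))) * S * x i := by ring
      _ = S * (a i * x i) := by rw [e1, e2]; ring
  have hinvr : ∀ i (r : ℝ), (1 / (a i * μ i)) ^ r = a i ^ (-r) * μ i ^ (-r) := by
    intro i r
    rw [one_div, Real.inv_rpow (mul_pos (ha i) (hμ i)).le, Real.mul_rpow (ha i).le (hμ i).le, mul_inv,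
      ← Real.rpow_neg (ha i).le, ← Real.rpow_neg (hμ i).le]
  -- identity 1 : w i * (T i) ^ p = S ^ p * (x i ^ p / μ i)
  have id1 : ∀ i, μ i ^ (1 / (p - 1)) * a i ^ q *
      ((1 / (a i * μ i)) ^ (1 / (p - 1)) * S * x i) ^ p = S ^ p * (x i ^ p / μ i) := by
    intro i
    have hbase : (0:ℝ) ≤ (1 / (a i * μ i)) ^ (1 / (p - 1)) :=
      Real.rpow_nonneg (one_div_nonneg.2 (mul_pos (ha i) (hμ i)).le) _
    have hcp : (1 / (p - 1)) * p = q := by rw [hq]; field_simp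
    have e0 : ((1 / (a i * μ i)) ^ (1 / (p - 1))) ^ p = a i ^ (-q) * μ i ^ (-q) := by
      rw [← Real.rpow_mul (one_div_nonneg.2 (mul_pos (ha i) (hμ i)).le), hcp, hinvr]
    have e1 : a i ^ q * a i ^ (-q) = 1 := by
      rw [← Real.rpow_add (ha i), add_neg_cancel, Real.rpow_zero]
    have e2 : μ i ^ (1 / (p - 1)) * μ i ^ (-q) = (μ i)⁻¹ := by
      rw [← Real.rpow_add (hμ i)]
      have : 1 / (p - 1) + -q = -1 := by linarith [hc1]
      rw [this, Real.rpow_neg_one]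
    calc μ i ^ (1 / (p - 1)) * a i ^ q * ((1 / (a i * μ i)) ^ (1 / (p - 1)) * S * x i) ^ p
        = μ i ^ (1 / (p - 1)) * a i ^ q *
          (((1 / (a i * μ i)) ^ (1 / (p - 1))) ^ p * S ^ p * x i ^ p) := by
          rw [Real.mul_rpow (mul_nonneg hbase hSpos.le) (hx i),
            Real.mul_rpow hbase hSpos.le]
      _ = (a i ^ q * a i ^ (-q)) * (μ i ^ (1 / (p - 1)) * μ i ^ (-q)) * S ^ p * x i ^ p := by
          rw [e0]; ring
      _ = S ^ p * (x i ^ p / μ i) := by rw [e1, e2]; ring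
  -- pointwise superquadratic inequality multiplied by weights
  have pointwise : ∀ i ∈ univ,
      μ i ^ (1 / (p - 1)) * a i ^ q * M ^ p
        + p * M ^ (p - 1) * (S * (a i * x i) - μ i ^ (1 / (p - 1)) * a i ^ q * M)
        + μ i ^ (1 / (p - 1)) * a i ^ q *
            |(1 / (a i * μ i)) ^ (1 / (p - 1)) * S * x i - M| ^ p
      ≤ S ^ p * (x i ^ p / μ i) := by
    intro i _
    have hT : 0 ≤ (1 / (a i * μ i)) ^ (1 / (p - 1)) * S * x i :=
      mul_nonneg (mul_nonneg (Real.rpow_nonneg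
        (one_div_nonneg.2 (mul_pos (ha i) (hμ i)).le) _) hSpos.le) (hx i)
    have hw : 0 ≤ μ i ^ (1 / (p - 1)) * a i ^ q :=
      mul_nonneg (Real.rpow_nonneg (hμ i).le _) (Real.rpow_nonneg (ha i).le _)
    have hk := sq_key hp hM hT
    have := mul_le_mul_of_nonneg_left hk hw
    rw [← id1 i]
    calc μ i ^ (1 / (p - 1)) * a i ^ q * M ^ p
          + p * M ^ (p - 1) * (S * (a i * x i) - μ i ^ (1 / (p - 1)) * a i ^ q * M)
          + μ i ^ (1 / (p - 1)) * a i ^ q *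
              |(1 / (a i * μ i)) ^ (1 / (p - 1)) * S * x i - M| ^ p
        = μ i ^ (1 / (p - 1)) * a i ^ q *
            (M ^ p + p * M ^ (p - 1) * ((1 / (a i * μ i)) ^ (1 / (p - 1)) * S * x i - M)
              + |(1 / (a i * μ i)) ^ (1 / (p - 1)) * S * x i - M| ^ p) := by
          rw [← id2 i]; ring
      _ ≤ μ i ^ (1 / (p - 1)) * a i ^ q *
            ((1 / (a i * μ i)) ^ (1 / (p - 1)) * S * x i) ^ p := this
  have hsum := Finset.sum_le_sum pointwise
  -- simplify the left sum
  have hL : ∑ i, (μ i ^ (1 / (p - 1)) * a i ^ q * M ^ p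
        + p * M ^ (p - 1) * (S * (a i * x i) - μ i ^ (1 / (p - 1)) * a i ^ q * M)
        + μ i ^ (1 / (p - 1)) * a i ^ q *
            |(1 / (a i * μ i)) ^ (1 / (p - 1)) * S * x i - M| ^ p)
      = S * M ^ p + ∑ i, μ i ^ (1 / (p - 1)) * a i ^ q *
            |(1 / (a i * μ i)) ^ (1 / (p - 1)) * S * x i - M| ^ p := by
    rw [Finset.sum_add_distrib, Finset.sum_add_distrib, ← Finset.sum_mul, ← hS]
    have hmid : ∑ i, p * M ^ (p - 1) * (S * (a i * x i) - μ i ^ (1 / (p - 1)) * a i ^ q * M)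
        = 0 := by
      rw [← Finset.mul_sum, Finset.sum_sub_distrib, ← Finset.mul_sum, ← hM_def,
        ← Finset.sum_mul, ← hS]
      ring
    rw [hmid]; ring
  have hR : ∑ i, S ^ p * (x i ^ p / μ i) = S ^ p * ∑ i, x i ^ p / μ i := by
    rw [Finset.mul_sum]
  rw [hL, hR] at hsum
  -- final algebra
  have hSp : (0:ℝ) < S ^ p := Real.rpow_pos_of_pos hSpos p
  have hSp1 : (0:ℝ) < S ^ (p - 1) := Real.rpow_pos_of_pos hSpos _
  have hfactor : S ^ p = S * S ^ (p - 1) := rpow_split (by linarith) hSpos.le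
  rw [ge_iff_le]
  have hrw : M ^ p / S ^ (p - 1) + (1 / S ^ p) * ∑ i, μ i ^ (1 / (p - 1)) * a i ^ q *
        |(1 / (a i * μ i)) ^ (1 / (p - 1)) * S * x i - M| ^ p
      = (S * M ^ p + ∑ i, μ i ^ (1 / (p - 1)) * a i ^ q *
            |(1 / (a i * μ i)) ^ (1 / (p - 1)) * S * x i - M| ^ p) / S ^ p := by
    rw [hfactor]
    field_simp
  rw [hrw, div_le_iff₀ hSp]
  linarith [hsum]
end

section
/- Let n be a positive integer, let x_1,…,x_n be nonnegative real numbers, let a_1,…,a_n and μ_1,…,μ_n be positive real numbers, let 1 < p ≤ 2, and let q satisfy 1/p + 1/q = 1. Set S = Σ_{j=1}^n μ_j^{1/(p-1)}·a_j^q. Then Σ_{i=1}^n x_i^p/μ_i ≤ (Σ_{i=1}^n a_i·x_i)^p / S^{p-1} + (1/S^p)·Σ_{i=1}^n μ_i^{1/(p-1)}·a_i^q·| (1/(a_i·μ_i))^{1/(p-1)}·S·x_i − Σ_{j=1}^n a_j·x_j |^p. -/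
/-!
For `u, v ≥ 0` and `1 ≤ p ≤ 2` one has the tangent-line bound
`u ^ p ≤ v ^ p + p * v ^ (p - 1) * (u - v) + |u - v| ^ p`: the difference of the two sides
vanishes at `u = v`, and its derivative in `u` has the right sign on either side of `v` because
`t ↦ t ^ (p - 1)` is subadditive. Apply it to `y i = (a i * μ i) ^ (-1 / (p - 1)) * x i` and to
their mean `v = (∑ a i * x i) / S` for the weights `w i = μ i ^ (1 / (p - 1)) * a i ^ q`, and sum
with these weights: the linear terms cancel, and since `q = p / (p - 1)` we have
`w i * y i = a i * x i` and `w i * y i ^ p = x i ^ p / μ i`.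
-/

open Finset

namespace Real

lemma rpow_le_tangent_add_sub_rpow_of_le {p u v : ℝ} (hp1 : 1 ≤ p) (hp2 : p ≤ 2) (hv : 0 ≤ v)
    (hvu : v ≤ u) : u ^ p ≤ v ^ p + p * v ^ (p - 1) * (u - v) + (u - v) ^ p := by
  let f : ℝ → ℝ := fun s ↦ v ^ p + p * v ^ (p - 1) * (s - v) + (s - v) ^ p - s ^ p
  have hf : ∀ s, HasDerivAt f (p * v ^ (p - 1) + p * (s - v) ^ (p - 1) - p * s ^ (p - 1)) s := by
    intro s
    have := ((((hasDerivAt_id' s).sub_const v).const_mul (p * v ^ (p - 1))).const_add (v ^ p)).add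
      (((hasDerivAt_id' s).sub_const v).rpow_const (p := p) (Or.inr hp1)) |>.sub
      (hasDerivAt_rpow_const (x := s) (Or.inr hp1))
    exact this.congr_deriv (by ring)
  have hmono : MonotoneOn f (Set.Ici v) := by
    refine monotoneOn_of_hasDerivWithinAt_nonneg (convex_Ici v)
      (fun s _ ↦ (hf s).continuousAt.continuousWithinAt) (fun s _ ↦ (hf s).hasDerivWithinAt)
      fun s hs ↦ ?_
    rw [interior_Ici] at hs
    have hsub := rpow_add_le_add_rpow (sub_nonneg.2 hs.le) hv (by linarith)
      (by linarith : p - 1 ≤ 1)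
    rw [sub_add_cancel] at hsub
    nlinarith
  have hfv : f v = 0 := by simp [f, zero_rpow (by linarith : p ≠ 0)]
  have := hmono Set.self_mem_Ici hvu hvu
  simp only [hfv, f] at this
  linarith

lemma rpow_le_tangent_add_sub_rpow_of_ge {p u v : ℝ} (hp1 : 1 ≤ p) (hp2 : p ≤ 2) (hu : 0 ≤ u)
    (huv : u ≤ v) : u ^ p ≤ v ^ p + p * v ^ (p - 1) * (u - v) + (v - u) ^ p := by
  let g : ℝ → ℝ := fun s ↦ v ^ p + p * v ^ (p - 1) * (s - v) + (v - s) ^ p - s ^ p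
  have hg : ∀ s, HasDerivAt g (p * v ^ (p - 1) - p * (v - s) ^ (p - 1) - p * s ^ (p - 1)) s := by
    intro s
    have := ((((hasDerivAt_id' s).sub_const v).const_mul (p * v ^ (p - 1))).const_add (v ^ p)).add
      (((hasDerivAt_id' s).const_sub v).rpow_const (p := p) (Or.inr hp1)) |>.sub
      (hasDerivAt_rpow_const (x := s) (Or.inr hp1))
    exact this.congr_deriv (by ring)
  have hanti : AntitoneOn g (Set.Icc 0 v) := by
    refine antitoneOn_of_hasDerivWithinAt_nonpos (convex_Icc 0 v)
      (fun s _ ↦ (hg s).continuousAt.continuousWithinAt) (fun s _ ↦ (hg s).hasDerivWithinAt)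
      fun s hs ↦ ?_
    rw [interior_Icc] at hs
    have hsub := rpow_add_le_add_rpow (sub_nonneg.2 hs.2.le) hs.1.le (by linarith)
      (by linarith : p - 1 ≤ 1)
    rw [sub_add_cancel] at hsub
    nlinarith
  have hgv : g v = 0 := by simp [g, zero_rpow (by linarith : p ≠ 0)]
  have := hanti ⟨hu, huv⟩ ⟨hu.trans huv, le_rfl⟩ huv
  simp only [hgv, g] at this
  linarith

lemma rpow_le_tangent_add_abs_sub_rpow {p u v : ℝ} (hp1 : 1 ≤ p) (hp2 : p ≤ 2) (hu : 0 ≤ u)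
    (hv : 0 ≤ v) : u ^ p ≤ v ^ p + p * v ^ (p - 1) * (u - v) + |u - v| ^ p := by
  rcases le_total v u with hvu | huv
  · rw [abs_of_nonneg (sub_nonneg.2 hvu)]
    exact rpow_le_tangent_add_sub_rpow_of_le hp1 hp2 hv hvu
  · rw [abs_of_nonpos (sub_nonpos.2 huv), neg_sub]
    exact rpow_le_tangent_add_sub_rpow_of_ge hp1 hp2 hu huv

end Real

lemma sum_mul_rpow_le_of_sum_mul_eq {ι : Type*} {s : Finset ι} {w y : ι → ℝ} {p v : ℝ}
    (hp1 : 1 ≤ p) (hp2 : p ≤ 2) (hw : ∀ i ∈ s, 0 ≤ w i) (hy : ∀ i ∈ s, 0 ≤ y i) (hv : 0 ≤ v)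
    (hmean : ∑ i ∈ s, w i * y i = (∑ i ∈ s, w i) * v) :
    ∑ i ∈ s, w i * y i ^ p ≤ (∑ i ∈ s, w i) * v ^ p + ∑ i ∈ s, w i * |y i - v| ^ p := by
  calc ∑ i ∈ s, w i * y i ^ p
      ≤ ∑ i ∈ s, w i * (v ^ p + p * v ^ (p - 1) * (y i - v) + |y i - v| ^ p) :=
        sum_le_sum fun i hi ↦ mul_le_mul_of_nonneg_left
          (Real.rpow_le_tangent_add_abs_sub_rpow hp1 hp2 (hy i hi) hv) (hw i hi)
    _ = (∑ i ∈ s, w i) * v ^ p + p * v ^ (p - 1) * (∑ i ∈ s, w i * y i - (∑ i ∈ s, w i) * v)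
          + ∑ i ∈ s, w i * |y i - v| ^ p := by
        have hterm : ∀ i ∈ s, w i * (v ^ p + p * v ^ (p - 1) * (y i - v) + |y i - v| ^ p) =
            w i * v ^ p + p * v ^ (p - 1) * (w i * y i) - p * v ^ (p - 1) * (w i * v)
              + w i * |y i - v| ^ p := fun i _ ↦ by ring
        rw [sum_congr rfl hterm, sum_add_distrib, sum_sub_distrib, sum_add_distrib, ← sum_mul,
          ← mul_sum, ← mul_sum, ← sum_mul]
        ring
    _ = (∑ i ∈ s, w i) * v ^ p + ∑ i ∈ s, w i * |y i - v| ^ p := by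
        rw [hmean, sub_self, mul_zero, add_zero]

lemma sum_mul_rpow_le_div_add {ι : Type*} {s : Finset ι} {w y : ι → ℝ} {p W T : ℝ}
    (hp1 : 1 ≤ p) (hp2 : p ≤ 2) (hw : ∀ i ∈ s, 0 ≤ w i) (hy : ∀ i ∈ s, 0 ≤ y i)
    (hW : ∑ i ∈ s, w i = W) (hT : ∑ i ∈ s, w i * y i = T) (hW0 : 0 < W) :
    ∑ i ∈ s, w i * y i ^ p ≤
      T ^ p / W ^ (p - 1) + 1 / W ^ p * ∑ i ∈ s, w i * |W * y i - T| ^ p := by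
  have hT0 : 0 ≤ T := hT ▸ sum_nonneg fun i hi ↦ mul_nonneg (hw i hi) (hy i hi)
  have hWp : W ^ p = W ^ (p - 1) * W := by
    rw [← Real.rpow_add_one hW0.ne', sub_add_cancel]
  convert sum_mul_rpow_le_of_sum_mul_eq hp1 hp2 hw hy (div_nonneg hT0 hW0.le)
    (by rw [hW, hT]; field_simp) using 2
  · rw [hW, Real.div_rpow hT0 hW0.le, hWp]
    field_simp
  · rw [mul_sum]
    refine sum_congr rfl fun i _ ↦ ?_
    rw [show y i - T / W = (W * y i - T) / W by field_simp, abs_div, abs_of_pos hW0,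
      Real.div_rpow (abs_nonneg _) hW0.le]
    ring

lemma rpow_mul_rpow_mul_one_div_mul_rpow {a μ r q : ℝ} (ha : 0 < a) (hμ : 0 < μ)
    (hq : q = r + 1) : μ ^ r * a ^ q * (1 / (a * μ)) ^ r = a := by
  rw [hq, Real.rpow_add_one ha.ne', Real.div_rpow zero_le_one (by positivity), Real.one_rpow,
    Real.mul_rpow ha.le hμ.le]
  field_simp

lemma rpow_mul_rpow_mul_one_div_mul_rpow_rpow {a μ p r q : ℝ} (ha : 0 < a) (hμ : 0 < μ)
    (hq : q = r + 1) (hrp : r * p = q) : μ ^ r * a ^ q * ((1 / (a * μ)) ^ r) ^ p = μ⁻¹ := by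
  rw [← Real.rpow_mul (by positivity), hrp, Real.div_rpow zero_le_one (by positivity),
    Real.one_rpow, Real.mul_rpow ha.le hμ.le, hq, Real.rpow_add_one hμ.ne']
  field_simp

open Finset in
theorem euler_lagrange_subquadratic_general (n : ℕ) (x : Fin n → ℝ)
    (hx : ∀ i, 0 ≤ x i) (a μ : Fin n → ℝ) (ha : ∀ i, 0 < a i) (hμ : ∀ i, 0 < μ i)
    (p q : ℝ) (hp1 : 1 < p) (hp2 : p ≤ 2) (hpq : 1 / p + 1 / q = 1)
    (S : ℝ) (hS : S = ∑ j, μ j ^ (1 / (p - 1)) * a j ^ q) :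
    ∑ i, x i ^ p / μ i ≤ (∑ i, a i * x i) ^ p / S ^ (p - 1) +
      (1 / S ^ p) * ∑ i, μ i ^ (1 / (p - 1)) * a i ^ q *
        |(1 / (a i * μ i)) ^ (1 / (p - 1)) * S * x i - ∑ j, a j * x j| ^ p := by
  obtain rfl | hn := n.eq_zero_or_pos
  · simp [Real.zero_rpow (by linarith : p ≠ 0)]
  have hconj : p.HolderConjugate q := Real.holderConjugate_iff.mpr ⟨hp1, by simpa using hpq⟩
  have hq : q = 1 / (p - 1) + 1 := by
    rw [hconj.conjugate_eq]; field_simp [hconj.sub_one_ne_zero]; ring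
  have hrp : 1 / (p - 1) * p = q := by rw [hq]; field_simp [hconj.sub_one_ne_zero]; ring
  have hw : ∀ i, 0 < μ i ^ (1 / (p - 1)) * a i ^ q := fun i ↦ by
    have := ha i; have := hμ i; positivity
  have hy : ∀ i, 0 ≤ (1 / (a i * μ i)) ^ (1 / (p - 1)) * x i := fun i ↦ by
    have := ha i; have := hμ i; have := hx i; positivity
  have hS0 : 0 < S := hS ▸ sum_pos (fun i _ ↦ hw i) ⟨⟨0, hn⟩, mem_univ _⟩
  calc ∑ i, x i ^ p / μ i
      = ∑ i, μ i ^ (1 / (p - 1)) * a i ^ q * ((1 / (a i * μ i)) ^ (1 / (p - 1)) * x i) ^ p := by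
        refine sum_congr rfl fun i _ ↦ ?_
        rw [Real.mul_rpow (by have := ha i; have := hμ i; positivity) (hx i), ← mul_assoc,
          rpow_mul_rpow_mul_one_div_mul_rpow_rpow (ha i) (hμ i) hq hrp, inv_mul_eq_div]
    _ ≤ _ := sum_mul_rpow_le_div_add hp1.le hp2 (fun i _ ↦ (hw i).le) (fun i _ ↦ hy i) hS.symm
        (sum_congr rfl fun i _ ↦ by
          rw [← mul_assoc, rpow_mul_rpow_mul_one_div_mul_rpow (ha i) (hμ i) hq]) hS0
    _ = _ := by simp only [mul_left_comm S, ← mul_assoc]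

open Finset in
/-- Theorem 3 (reverse case): subquadratic reverse of the refined n-term Bohr type
inequality for 1 < p ≤ 2. -/
theorem euler_lagrange_subquadratic (n : ℕ) (hn : 0 < n) (x : Fin n → ℝ)
    (hx : ∀ i, 0 ≤ x i) (a μ : Fin n → ℝ) (ha : ∀ i, 0 < a i) (hμ : ∀ i, 0 < μ i)
    (p q : ℝ) (hp1 : 1 < p) (hp2 : p ≤ 2) (hpq : 1 / p + 1 / q = 1)
    (S : ℝ) (hS : S = ∑ j, μ j ^ (1 / (p - 1)) * a j ^ q) :
    ∑ i, x i ^ p / μ i ≤ (∑ i, a i * x i) ^ p / S ^ (p - 1) +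
      (1 / S ^ p) * ∑ i, μ i ^ (1 / (p - 1)) * a i ^ q *
        |(1 / (a i * μ i)) ^ (1 / (p - 1)) * S * x i - ∑ j, a j * x j| ^ p :=
  euler_lagrange_subquadratic_general n x hx a μ ha hμ p q hp1 hp2 hpq S hS
end

section
/- Let x, y be nonnegative real numbers, let a, b, μ, ν be positive real numbers, let p ≥ 2 and let q satisfy 1/p + 1/q = 1. Set S = μ^{1/(p-1)}·a^q + ν^{1/(p-1)}·b^q. Then x^p/μ + y^p/ν ≥ (a·x + b·y)^p / S^{p-1} + μ^{1/(p-1)}·a^q·| (1/(a·μ))^{1/(p-1)}·x − (a·x + b·y)/S |^p + ν^{1/(p-1)}·b^q·| (1/(ν·b))^{1/(p-1)}·y − (a·x + b·y)/S |^p. -/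
/-!
For `p ≥ 2` the function `t ↦ t ^ p` is superquadratic on `[0, ∞)`:
`s ^ p ≥ t ^ p + p t ^ (p - 1) (s - t) + |s - t| ^ p`, since the difference of the two sides
vanishes at `s = t` and is monotone away from it by superadditivity of `z ↦ z ^ (p - 1)`.
Summing this at `t = m` over points `uᵢ` with weights `cᵢ` of weighted mean `m`, the linear
terms cancel. For the points `(a μ)^(-1/(p-1)) x`, `(b ν)^(-1/(p-1)) y` with weights
`μ^(1/(p-1)) a^q`, `ν^(1/(p-1)) b^q` one has `cᵢ uᵢ = a x, b y` and
`cᵢ uᵢ^p = x^p/μ, y^p/ν`, so the weights sum to `S` and the weighted mean is `(a x + b y) / S`.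
-/

open Real Finset

def Superquadratic (f : ℝ → ℝ) : Prop :=
  ∀ x, 0 ≤ x → ∃ C, ∀ y, 0 ≤ y → f x + C * (y - x) + f |y - x| ≤ f y

theorem Superquadratic.map_sum_le {f : ℝ → ℝ} (hf : Superquadratic f) {ι : Type*}
    (s : Finset ι) {c u : ι → ℝ} (hc : ∀ i ∈ s, 0 ≤ c i) (hu : ∀ i ∈ s, 0 ≤ u i)
    {m : ℝ} (hm : 0 ≤ m) (hmean : ∑ i ∈ s, c i * u i = (∑ i ∈ s, c i) * m) :
    (∑ i ∈ s, c i) * f m + ∑ i ∈ s, c i * f |u i - m| ≤ ∑ i ∈ s, c i * f (u i) := by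
  obtain ⟨C, hC⟩ := hf m hm
  have hlin : ∑ i ∈ s, c i * (C * (u i - m)) = 0 := by
    simp only [mul_left_comm (c _) C, mul_sub, ← mul_sum, sum_sub_distrib, ← sum_mul, hmean,
      sub_self]
  calc (∑ i ∈ s, c i) * f m + ∑ i ∈ s, c i * f |u i - m|
      = ∑ i ∈ s, c i * (f m + C * (u i - m) + f |u i - m|) := by
        simp only [mul_add, sum_add_distrib, hlin, sum_mul]; ring
    _ ≤ ∑ i ∈ s, c i * f (u i) :=
        sum_le_sum fun i hi => mul_le_mul_of_nonneg_left (hC _ (hu i hi)) (hc i hi)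

namespace Real

variable {p : ℝ}

lemma rpow_add_superquadratic (hp : 2 ≤ p) {t h : ℝ} (ht : 0 ≤ t) (hh : 0 ≤ h) :
    t ^ p + p * t ^ (p - 1) * h + h ^ p ≤ (t + h) ^ p := by
  let G : ℝ → ℝ := fun h => (t + h) ^ p - t ^ p - p * t ^ (p - 1) * h - h ^ p
  have hG : ∀ h, HasDerivAt G (p * ((t + h) ^ (p - 1) - t ^ (p - 1) - h ^ (p - 1))) h := by
    intro h
    have hp1 : 1 ≤ p := by linarith
    refine (((((hasDerivAt_id' h).const_add t).rpow_const (Or.inr hp1)).sub_const (t ^ p)).sub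
      ((hasDerivAt_id' h).const_mul (p * t ^ (p - 1))) |>.sub
      ((hasDerivAt_id' h).rpow_const (Or.inr hp1))).congr_deriv ?_
    ring
  have hmono : MonotoneOn G (Set.Ici 0) := by
    refine monotoneOn_of_hasDerivWithinAt_nonneg (convex_Ici 0)
      (continuous_iff_continuousAt.2 fun h => (hG h).continuousAt).continuousOn
      (fun h _ => (hG h).hasDerivWithinAt) fun h hh => ?_
    rw [interior_Ici] at hh
    have := add_rpow_le_rpow_add ht hh.out.le (by linarith : 1 ≤ p - 1)
    exact mul_nonneg (by linarith) (by linarith)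
  have := hmono Set.self_mem_Ici hh hh
  simp only [G, add_zero, mul_zero, sub_self, zero_rpow (by linarith : p ≠ 0)] at this
  linarith

lemma rpow_sub_superquadratic (hp : 2 ≤ p) {t h : ℝ} (hh : 0 ≤ h) (hht : h ≤ t) :
    t ^ p - p * t ^ (p - 1) * h + h ^ p ≤ (t - h) ^ p := by
  let G : ℝ → ℝ := fun h => (t - h) ^ p - t ^ p + p * t ^ (p - 1) * h - h ^ p
  have hG : ∀ h, HasDerivAt G (p * (t ^ (p - 1) - (t - h) ^ (p - 1) - h ^ (p - 1))) h := by
    intro h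
    have hp1 : 1 ≤ p := by linarith
    refine (((((hasDerivAt_id' h).const_sub t).rpow_const (Or.inr hp1)).sub_const (t ^ p)).add
      ((hasDerivAt_id' h).const_mul (p * t ^ (p - 1))) |>.sub
      ((hasDerivAt_id' h).rpow_const (Or.inr hp1))).congr_deriv ?_
    ring
  have hmono : MonotoneOn G (Set.Icc 0 t) := by
    refine monotoneOn_of_hasDerivWithinAt_nonneg (convex_Icc 0 t)
      (continuous_iff_continuousAt.2 fun h => (hG h).continuousAt).continuousOn
      (fun h _ => (hG h).hasDerivWithinAt) fun h hh => ?_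
    rw [interior_Icc] at hh
    have := add_rpow_le_rpow_add (sub_nonneg.2 hh.2.le) hh.1.le (by linarith : 1 ≤ p - 1)
    rw [sub_add_cancel] at this
    exact mul_nonneg (by linarith) (by linarith)
  have := hmono ⟨le_rfl, hh.trans hht⟩ ⟨hh, hht⟩ hh
  simp only [G, sub_zero, mul_zero, add_zero, sub_self, zero_rpow (by linarith : p ≠ 0)] at this
  linarith

lemma superquadratic_rpow (hp : 2 ≤ p) : Superquadratic fun x => x ^ p := by
  refine fun t ht => ⟨p * t ^ (p - 1), fun s hs => ?_⟩
  rcases le_total t s with hts | hst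
  · rw [abs_of_nonneg (sub_nonneg.2 hts)]
    simpa using rpow_add_superquadratic hp ht (sub_nonneg.2 hts)
  · rw [abs_of_nonpos (sub_nonpos.2 hst), neg_sub]
    have := rpow_sub_superquadratic hp (sub_nonneg.2 hst) (sub_le_self t hs)
    rw [sub_sub_cancel] at this
    linarith

section ConjugateWeights

variable {p q a w : ℝ}

lemma HolderConjugate.eq_one_div_sub_one_add_one (hpq : p.HolderConjugate q) :
    q = 1 / (p - 1) + 1 := by
  rw [hpq.conjugate_eq]; field_simp [hpq.sub_one_ne_zero]; ring

lemma conj_weight_mul (hpq : p.HolderConjugate q) (ha : 0 < a) (hw : 0 < w) (x : ℝ) :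
    w ^ (1 / (p - 1)) * a ^ q * ((1 / (a * w)) ^ (1 / (p - 1)) * x) = a * x := by
  rw [one_div (a * w), inv_rpow (by positivity), mul_rpow ha.le hw.le,
    hpq.eq_one_div_sub_one_add_one, rpow_add ha, rpow_one]
  field_simp

lemma conj_weight_mul_rpow (hpq : p.HolderConjugate q) (ha : 0 < a) (hw : 0 < w) {x : ℝ}
    (hx : 0 ≤ x) :
    w ^ (1 / (p - 1)) * a ^ q * ((1 / (a * w)) ^ (1 / (p - 1)) * x) ^ p = x ^ p / w := by
  have hq : 1 / (p - 1) * p = q := by rw [hpq.conjugate_eq]; ring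
  rw [mul_rpow (by positivity) hx, ← rpow_mul (by positivity), hq, one_div (a * w),
    inv_rpow (by positivity), mul_rpow ha.le hw.le, hpq.eq_one_div_sub_one_add_one,
    rpow_add hw, rpow_one]
  field_simp

end ConjugateWeights

lemma mul_div_rpow_eq_rpow_div_rpow_sub_one {S A p : ℝ} (hS : 0 < S) (hA : 0 ≤ A) :
    S * (A / S) ^ p = A ^ p / S ^ (p - 1) := by
  rw [div_rpow hA hS.le, rpow_sub_one hS.ne']
  field_simp

end Real

/-- Corollary 2 (inequality (2.10)): the two-term superquadratic refinement for p ≥ 2. -/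
theorem euler_lagrange_superquadratic_two_terms (x y : ℝ) (hx : 0 ≤ x) (hy : 0 ≤ y)
    (a b μ ν : ℝ) (ha : 0 < a) (hb : 0 < b) (hμ : 0 < μ) (hν : 0 < ν)
    (p q : ℝ) (hp : 2 ≤ p) (hpq : 1 / p + 1 / q = 1)
    (S : ℝ) (hS : S = μ ^ (1 / (p - 1)) * a ^ q + ν ^ (1 / (p - 1)) * b ^ q) :
    x ^ p / μ + y ^ p / ν ≥ (a * x + b * y) ^ p / S ^ (p - 1) +
      μ ^ (1 / (p - 1)) * a ^ q * |(1 / (a * μ)) ^ (1 / (p - 1)) * x - (a * x + b * y) / S| ^ p +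
      ν ^ (1 / (p - 1)) * b ^ q * |(1 / (ν * b)) ^ (1 / (p - 1)) * y - (a * x + b * y) / S| ^ p := by
  have hpq : p.HolderConjugate q :=
    holderConjugate_iff.2 ⟨by linarith, by simpa only [one_div] using hpq⟩
  have hS₀ : 0 < S := hS ▸ by positivity
  have hA : 0 ≤ a * x + b * y := by positivity
  rw [mul_comm ν b]
  have key := (superquadratic_rpow hp).map_sum_le univ
    (c := ![μ ^ (1 / (p - 1)) * a ^ q, ν ^ (1 / (p - 1)) * b ^ q])
    (u := ![(1 / (a * μ)) ^ (1 / (p - 1)) * x, (1 / (b * ν)) ^ (1 / (p - 1)) * y])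
    (m := (a * x + b * y) / S) (fun i _ => by fin_cases i <;> dsimp <;> positivity)
    (fun i _ => by fin_cases i <;> dsimp <;> positivity) (by positivity) ?_
  · simp only [Fin.sum_univ_two, Matrix.cons_val_zero, Matrix.cons_val_one, ← hS,
      mul_div_rpow_eq_rpow_div_rpow_sub_one hS₀ hA, conj_weight_mul_rpow hpq ha hμ hx,
      conj_weight_mul_rpow hpq hb hν hy] at key
    linarith
  · simp only [Fin.sum_univ_two, Matrix.cons_val_zero, Matrix.cons_val_one, ← hS,
      conj_weight_mul hpq ha hμ, conj_weight_mul hpq hb hν]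
    field_simp
end

section
/- Let n be a positive integer, let x_1,…,x_n be nonnegative real numbers, let a_1,…,a_n and μ_1,…,μ_n be positive real numbers, let 1 < p ≤ 2, and let q satisfy 1/p + 1/q = 1. Set S = Σ_{j=1}^n μ_j^{1/(p-1)}·a_j^q. Then 0 ≤ Σ_{i=1}^n x_i^p/μ_i − (Σ_{i=1}^n a_i·x_i)^p / S^{p-1} ≤ (1/S^p)·Σ_{i=1}^n μ_i^{1/(p-1)}·a_i^q·| (1/(a_i·μ_i))^{1/(p-1)}·S·x_i − Σ_{j=1}^n a_j·x_j |^p. -/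
/-!
Put `w i = μ i ^ (1 / (p - 1)) * a i ^ q` and `t i = (1 / (a i * μ i)) ^ (1 / (p - 1)) * S * x i`.
Then `∑ w = S`, the `w`-weighted mean of the `t i` is `T = ∑ a j * x j`, and
`∑ w i * t i ^ p = S ^ p * ∑ x i ^ p / μ i`, so the bounded difference equals
`(∑ w i * t i ^ p - S * T ^ p) / S ^ p`. Jensen's inequality for `t ↦ t ^ p` makes it nonnegative.
For the upper bound, `t ^ p ≤ T ^ p + p T ^ (p - 1) (t - T) + |t - T| ^ p` for `1 ≤ p ≤ 2`;
summed with the weights `w i`, the linear terms cancel because `T` is the weighted mean.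
-/

open Finset

/- Differentiating in `a`, the sign of the derivative of the difference of the two sides comes from
subadditivity of `y ↦ y ^ (p - 1)`, as `0 ≤ p - 1 ≤ 1`. -/
theorem rpow_le_tangent_add_abs_sub_rpow {p a b : ℝ} (hp1 : 1 ≤ p) (hp2 : p ≤ 2)
    (ha : 0 ≤ a) (hb : 0 ≤ b) :
    a ^ p ≤ b ^ p + p * b ^ (p - 1) * (a - b) + |a - b| ^ p := by
  have hs0 : 0 ≤ p - 1 := by linarith
  have hs1 : p - 1 ≤ 1 := by linarith
  have hpow (y : ℝ) : HasDerivAt (fun y => y ^ p) (p * y ^ (p - 1)) y :=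
    Real.hasDerivAt_rpow_const (Or.inr hp1)
  rcases le_total b a with hba | hab
  · have hderiv (y : ℝ) : HasDerivAt (fun y => y ^ p - p * b ^ (p - 1) * y - (y - b) ^ p)
        (p * y ^ (p - 1) - p * b ^ (p - 1) - p * (y - b) ^ (p - 1)) y := by
      refine (((hpow y).sub ((hasDerivAt_id' y).const_mul (p * b ^ (p - 1)))).sub
        (((hasDerivAt_id' y).sub_const b).rpow_const (Or.inr hp1))).congr_deriv ?_
      ring
    have hanti := antitoneOn_of_hasDerivWithinAt_nonpos (convex_Ici b)
      (HasDerivAt.continuousOn fun y _ => hderiv y) (fun y _ => (hderiv y).hasDerivWithinAt)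
      fun y hy => by
        rw [interior_Ici] at hy
        have := Real.rpow_add_le_add_rpow (sub_nonneg.2 (le_of_lt hy)) hb hs0 hs1
        rw [sub_add_cancel] at this
        nlinarith
    have := hanti Set.self_mem_Ici hba hba
    simp only [sub_self, Real.zero_rpow (by linarith : p ≠ 0)] at this
    rw [abs_of_nonneg (sub_nonneg.2 hba)]
    linarith
  · have hderiv (y : ℝ) : HasDerivAt (fun y => y ^ p - p * b ^ (p - 1) * y - (b - y) ^ p)
        (p * y ^ (p - 1) - p * b ^ (p - 1) + p * (b - y) ^ (p - 1)) y := by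
      refine (((hpow y).sub ((hasDerivAt_id' y).const_mul (p * b ^ (p - 1)))).sub
        (((hasDerivAt_id' y).const_sub b).rpow_const (Or.inr hp1))).congr_deriv ?_
      ring
    have hmono := monotoneOn_of_hasDerivWithinAt_nonneg (convex_Icc 0 b)
      (HasDerivAt.continuousOn fun y _ => hderiv y) (fun y _ => (hderiv y).hasDerivWithinAt)
      fun y hy => by
        rw [interior_Icc] at hy
        have := Real.rpow_add_le_add_rpow hy.1.le (sub_nonneg.2 hy.2.le) hs0 hs1
        rw [add_sub_cancel] at this
        nlinarith
    have := hmono ⟨ha, hab⟩ ⟨hb, le_rfl⟩ hab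
    simp only [sub_self, Real.zero_rpow (by linarith : p ≠ 0)] at this
    rw [abs_of_nonpos (sub_nonpos.2 hab), neg_sub]
    linarith

section WeightedMean

variable {ι : Type*} (s : Finset ι) {p m : ℝ} {w t : ι → ℝ}

theorem mul_rpow_le_sum_mul_rpow_of_sum_mul_eq (hp : 1 ≤ p) (hw : ∀ i ∈ s, 0 ≤ w i)
    (hW : 0 < ∑ i ∈ s, w i) (ht : ∀ i ∈ s, 0 ≤ t i)
    (hm : ∑ i ∈ s, w i * t i = (∑ i ∈ s, w i) * m) :
    (∑ i ∈ s, w i) * m ^ p ≤ ∑ i ∈ s, w i * t i ^ p := by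
  set W := ∑ i ∈ s, w i
  have hmean : ∑ i ∈ s, w i / W * t i = m := by
    simp only [div_mul_eq_mul_div, ← sum_div, hm, mul_div_cancel_left₀ _ hW.ne']
  have hJ := Real.rpow_arith_mean_le_arith_mean_rpow s (fun i => w i / W) t
    (fun i hi => div_nonneg (hw i hi) hW.le) (by rw [← sum_div, div_self hW.ne']) ht hp
  rw [hmean] at hJ
  simp only [div_mul_eq_mul_div, ← sum_div] at hJ
  rwa [le_div_iff₀ hW, mul_comm] at hJ

theorem sum_mul_rpow_le_mul_rpow_add_sum_mul_abs_sub_rpow (hp1 : 1 ≤ p) (hp2 : p ≤ 2)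
    (hw : ∀ i ∈ s, 0 ≤ w i) (ht : ∀ i ∈ s, 0 ≤ t i) (hm0 : 0 ≤ m)
    (hm : ∑ i ∈ s, w i * t i = (∑ i ∈ s, w i) * m) :
    ∑ i ∈ s, w i * t i ^ p ≤ (∑ i ∈ s, w i) * m ^ p + ∑ i ∈ s, w i * |t i - m| ^ p := by
  set c := p * m ^ (p - 1)
  calc ∑ i ∈ s, w i * t i ^ p
      ≤ ∑ i ∈ s, w i * (m ^ p + c * (t i - m) + |t i - m| ^ p) :=
        sum_le_sum fun i hi =>
          mul_le_mul_of_nonneg_left (rpow_le_tangent_add_abs_sub_rpow hp1 hp2 (ht i hi) hm0)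
            (hw i hi)
    _ = (∑ i ∈ s, w i) * m ^ p + c * (∑ i ∈ s, w i * t i - (∑ i ∈ s, w i) * m)
          + ∑ i ∈ s, w i * |t i - m| ^ p := by
        simp only [mul_add, mul_sub, mul_left_comm (w _) c, sum_add_distrib, sum_sub_distrib,
          sum_mul, mul_sum]
    _ = _ := by rw [hm, sub_self, mul_zero, add_zero]

end WeightedMean

namespace Real.HolderConjugate

variable {p q a μ : ℝ}

theorem rpow_conj_eq_mul_rpow (hpq : p.HolderConjugate q) (ha : 0 ≤ a) :
    a ^ q = a * a ^ (1 / (p - 1)) := by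
  rw [hpq.conjugate_eq, ← rpow_one_add' ha (by have := hpq.sub_one_pos; positivity)]
  congr 1
  field_simp [hpq.sub_one_ne_zero]
  ring

theorem rpow_mul_rpow_mul_one_div_rpow_mul_mul (hpq : p.HolderConjugate q) (ha : 0 < a)
    (hμ : 0 < μ) (S x : ℝ) :
    μ ^ (1 / (p - 1)) * a ^ q * ((1 / (a * μ)) ^ (1 / (p - 1)) * S * x) = S * (a * x) := by
  rw [div_rpow zero_le_one (by positivity), one_rpow, mul_rpow ha.le hμ.le,
    hpq.rpow_conj_eq_mul_rpow ha.le]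
  field_simp

theorem rpow_mul_rpow_mul_one_div_rpow_mul_mul_rpow (hpq : p.HolderConjugate q) (ha : 0 < a)
    (hμ : 0 < μ) {S x : ℝ} (hS : 0 ≤ S) (hx : 0 ≤ x) :
    μ ^ (1 / (p - 1)) * a ^ q * ((1 / (a * μ)) ^ (1 / (p - 1)) * S * x) ^ p
      = S ^ p * (x ^ p / μ) := by
  rw [mul_rpow (by positivity) hx, mul_rpow (by positivity) hS, ← rpow_mul (by positivity),
    show 1 / (p - 1) * p = q by rw [hpq.conjugate_eq]; field_simp,
    div_rpow zero_le_one (by positivity), one_rpow, mul_rpow ha.le hμ.le,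
    hpq.rpow_conj_eq_mul_rpow hμ.le]
  field_simp

end Real.HolderConjugate

open Finset in
/-- Corollary 3: two-sided bounds for 1 < p ≤ 2, combining convexity and
subquadraticity of x^p. -/
theorem euler_lagrange_two_sided (n : ℕ) (hn : 0 < n) (x : Fin n → ℝ)
    (hx : ∀ i, 0 ≤ x i) (a μ : Fin n → ℝ) (ha : ∀ i, 0 < a i) (hμ : ∀ i, 0 < μ i)
    (p q : ℝ) (hp1 : 1 < p) (hp2 : p ≤ 2) (hpq : 1 / p + 1 / q = 1)
    (S : ℝ) (hS : S = ∑ j, μ j ^ (1 / (p - 1)) * a j ^ q) :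
    0 ≤ ∑ i, x i ^ p / μ i - (∑ i, a i * x i) ^ p / S ^ (p - 1) ∧
    ∑ i, x i ^ p / μ i - (∑ i, a i * x i) ^ p / S ^ (p - 1) ≤
      (1 / S ^ p) * ∑ i, μ i ^ (1 / (p - 1)) * a i ^ q *
        |(1 / (a i * μ i)) ^ (1 / (p - 1)) * S * x i - ∑ j, a j * x j| ^ p := by
  have hconj : p.HolderConjugate q :=
    Real.holderConjugate_iff.2 ⟨hp1, by simpa only [one_div] using hpq⟩
  set w : Fin n → ℝ := fun i => μ i ^ (1 / (p - 1)) * a i ^ q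
  set t : Fin n → ℝ := fun i => (1 / (a i * μ i)) ^ (1 / (p - 1)) * S * x i
  set T := ∑ j, a j * x j
  have hw (i : Fin n) : 0 ≤ w i := by have := ha i; have := hμ i; positivity
  have hS0 : 0 < S := hS ▸ sum_pos (fun i _ => by have := ha i; have := hμ i; positivity)
    (univ_nonempty_iff.2 ⟨⟨0, hn⟩⟩)
  have ht (i : Fin n) : 0 ≤ t i := by have := ha i; have := hμ i; have := hx i; positivity
  have hmean : ∑ i, w i * t i = (∑ i, w i) * T := by
    rw [← hS, mul_sum]
    exact sum_congr rfl fun i _ =>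
      hconj.rpow_mul_rpow_mul_one_div_rpow_mul_mul (ha i) (hμ i) S (x i)
  have hpow : ∑ i, w i * t i ^ p = S ^ p * ∑ i, x i ^ p / μ i := by
    rw [mul_sum]
    exact sum_congr rfl fun i _ =>
      hconj.rpow_mul_rpow_mul_one_div_rpow_mul_mul_rpow (ha i) (hμ i) hS0.le (hx i)
  have hdiff : ∑ i, x i ^ p / μ i - T ^ p / S ^ (p - 1)
      = (∑ i, w i * t i ^ p - (∑ i, w i) * T ^ p) / S ^ p := by
    rw [hpow, ← hS, Real.rpow_sub_one hS0.ne']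
    field_simp
  rw [hdiff, one_div_mul_eq_div]
  have hT : 0 ≤ T := sum_nonneg fun i _ => mul_nonneg (ha i).le (hx i)
  constructor
  · exact div_nonneg (sub_nonneg.2 (mul_rpow_le_sum_mul_rpow_of_sum_mul_eq _ hp1.le
      (fun i _ => hw i) (hS ▸ hS0) (fun i _ => ht i) hmean)) (by positivity)
  · refine div_le_div_of_nonneg_right ?_ (by positivity)
    linarith [sum_mul_rpow_le_mul_rpow_add_sum_mul_abs_sub_rpow univ hp1.le hp2
      (fun i _ => hw i) (fun i _ => ht i) hT hmean]
end

section
/- For every real p ≥ 2, the function f(x) = x^p on [0,∞) is superquadratic: for every x ≥ 0 there exists a constant C(x) ∈ ℝ (one may take C(x) = p·x^{p−1}) such that for all y ≥ 0, y^p ≥ x^p + C(x)·(y − x) + |y − x|^p. -/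
/-!
If `f 0 = 0` and `f` has a superadditive derivative `f'` on `[0, ∞)`, then for fixed `x ≥ 0` the
function `g y = f y - f |y - x| - f' x * (y - x)` has derivative `f' y - f' (y - x) - f' x ≥ 0`
for `y > x` and `f' y + f' (x - y) - f' x ≤ 0` for `y < x`. Hence `g` is smallest at `y = x`,
where it equals `f x`. For `f s = s ^ p` with `p ≥ 2` the derivative `p * s ^ (p - 1)` is
superadditive because `p - 1 ≥ 1`.
-/

section SuperadditiveDeriv

variable {f f' : ℝ → ℝ}

theorem superquadratic_ineq_of_le (hf : ∀ s, 0 ≤ s → HasDerivAt f (f' s) s)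
    (hf' : ∀ a b, 0 ≤ a → 0 ≤ b → f' a + f' b ≤ f' (a + b)) (hf0 : f 0 = 0)
    {x y : ℝ} (hx : 0 ≤ x) (hxy : x ≤ y) :
    f x + f' x * (y - x) + f (y - x) ≤ f y := by
  set g : ℝ → ℝ := fun s => f s - f (s - x) - f' x * (s - x)
  have hg_deriv : ∀ s ∈ Set.Ici x, HasDerivAt g (f' s - f' (s - x) - f' x) s := fun s hs => by
    have hshift := (hf (s - x) (sub_nonneg.2 hs)).comp_sub_const s x
    exact (((hf s (hx.trans hs)).sub hshift).sub
      (((hasDerivAt_id s).sub_const x).const_mul (f' x))).congr_deriv (by rw [mul_one])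
  have hg_mono : MonotoneOn g (Set.Ici x) := by
    refine monotoneOn_of_hasDerivWithinAt_nonneg (convex_Ici x)
      (fun s hs => (hg_deriv s hs).continuousAt.continuousWithinAt)
      (fun s hs => (hg_deriv s (interior_subset hs)).hasDerivWithinAt) fun s hs => ?_
    rw [interior_Ici] at hs
    have hsuper := hf' x (s - x) hx (sub_nonneg.2 hs.le)
    rw [add_sub_cancel] at hsuper
    linarith
  have hgxy := hg_mono Set.self_mem_Ici hxy hxy
  simp only [g, sub_self, hf0, mul_zero] at hgxy
  linarith

theorem superquadratic_ineq_of_ge (hf : ∀ s, 0 ≤ s → HasDerivAt f (f' s) s)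
    (hf' : ∀ a b, 0 ≤ a → 0 ≤ b → f' a + f' b ≤ f' (a + b)) (hf0 : f 0 = 0)
    {x y : ℝ} (hy : 0 ≤ y) (hyx : y ≤ x) :
    f x + f' x * (y - x) + f (x - y) ≤ f y := by
  set g : ℝ → ℝ := fun s => f s - f (x - s) - f' x * (s - x)
  have hg_deriv : ∀ s ∈ Set.Icc 0 x, HasDerivAt g (f' s + f' (x - s) - f' x) s := fun s hs => by
    have hreflect := (hf (x - s) (sub_nonneg.2 hs.2)).comp_const_sub x s
    exact (((hf s hs.1).sub hreflect).sub
      (((hasDerivAt_id s).sub_const x).const_mul (f' x))).congr_deriv (by ring)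
  have hg_anti : AntitoneOn g (Set.Icc 0 x) := by
    refine antitoneOn_of_hasDerivWithinAt_nonpos (convex_Icc 0 x)
      (fun s hs => (hg_deriv s hs).continuousAt.continuousWithinAt)
      (fun s hs => (hg_deriv s (interior_subset hs)).hasDerivWithinAt) fun s hs => ?_
    rw [interior_Icc] at hs
    have hsuper := hf' s (x - s) hs.1.le (sub_nonneg.2 hs.2.le)
    rw [add_sub_cancel] at hsuper
    linarith
  have hgxy := hg_anti ⟨hy, hyx⟩ ⟨hy.trans hyx, le_rfl⟩ hyx
  simp only [g, sub_self, hf0, mul_zero] at hgxy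
  linarith

theorem superquadratic_ineq (hf : ∀ s, 0 ≤ s → HasDerivAt f (f' s) s)
    (hf' : ∀ a b, 0 ≤ a → 0 ≤ b → f' a + f' b ≤ f' (a + b)) (hf0 : f 0 = 0)
    {x y : ℝ} (hx : 0 ≤ x) (hy : 0 ≤ y) :
    f x + f' x * (y - x) + f |y - x| ≤ f y := by
  rcases le_total x y with hxy | hyx
  · rw [abs_of_nonneg (sub_nonneg.2 hxy)]
    exact superquadratic_ineq_of_le hf hf' hf0 hx hxy
  · rw [abs_sub_comm, abs_of_nonneg (sub_nonneg.2 hyx)]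
    exact superquadratic_ineq_of_ge hf hf' hf0 hy hyx

end SuperadditiveDeriv

/-- For p ≥ 2 the power function x ↦ x^p is superquadratic on [0,∞), with
C(x) = p·x^{p-1} as an admissible constant. -/
theorem rpow_superquadratic (p : ℝ) (hp : 2 ≤ p) (x : ℝ) (hx : 0 ≤ x) :
    ∃ C : ℝ, C = p * x ^ (p - 1) ∧
      ∀ y : ℝ, 0 ≤ y → y ^ p ≥ x ^ p + C * (y - x) + |y - x| ^ p := by
  refine ⟨_, rfl, fun y hy => ?_⟩
  have hp1 : 1 ≤ p := by linarith
  have hderiv_superadditive (a b : ℝ) (ha : 0 ≤ a) (hb : 0 ≤ b) :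
      p * a ^ (p - 1) + p * b ^ (p - 1) ≤ p * (a + b) ^ (p - 1) := by
    rw [← mul_add]
    exact mul_le_mul_of_nonneg_left (Real.add_rpow_le_rpow_add ha hb (by linarith)) (by linarith)
  exact superquadratic_ineq (f := fun s => s ^ p) (f' := fun s => p * s ^ (p - 1))
    (fun s _ => Real.hasDerivAt_rpow_const (Or.inr hp1)) hderiv_superadditive
    (Real.zero_rpow (by linarith)) hx hy
end

section
/- For every real p with 1 ≤ p ≤ 2, the function f(x) = x^p on [0,∞) is subquadratic: for every x ≥ 0 there exists a constant C(x) ∈ ℝ (one may take C(x) = p·x^{p−1}) such that for all y ≥ 0, y^p ≤ x^p + C(x)·(y − x) + |y − x|^p. -/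
/-!
Fix `x` and put `C = p x^(p-1)`. The defect `φ(y) = x^p + C (y - x) + |y - x|^p - y^p` vanishes
at `y = x`, and on either side of `x` its derivative is `p (x^(p-1) - y^(p-1) ± |y - x|^(p-1))`.
Since `0 ≤ p - 1 ≤ 1`, the map `t ↦ t^(p-1)` is `(p-1)`-Hölder with constant `1` on `[0, ∞)`,
so this derivative has the sign of `y - x`: `φ` decreases up to `x` and increases after it.
-/

open Set

namespace Real

lemma rpow_sub_rpow_le_rpow_sub {q u v : ℝ} (hq0 : 0 ≤ q) (hq1 : q ≤ 1) (hu : 0 ≤ u)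
    (huv : u ≤ v) : v ^ q - u ^ q ≤ (v - u) ^ q := by
  have h := rpow_add_le_add_rpow hu (sub_nonneg.2 huv) hq0 hq1
  rw [add_sub_cancel] at h
  linarith

lemma rpow_le_tangent_add_rpow_sub_of_le {p x y : ℝ} (hp1 : 1 ≤ p) (hp2 : p ≤ 2) (hx : 0 ≤ x)
    (hxy : x ≤ y) : y ^ p ≤ x ^ p + p * x ^ (p - 1) * (y - x) + (y - x) ^ p := by
  set φ : ℝ → ℝ := fun z ↦ x ^ p + p * x ^ (p - 1) * (z - x) + (z - x) ^ p - z ^ p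
  have hφ' (z : ℝ) :
      HasDerivAt φ (p * x ^ (p - 1) + p * (z - x) ^ (p - 1) - p * z ^ (p - 1)) z := by
    have hlin := ((hasDerivAt_id z).sub_const x).const_mul (p * x ^ (p - 1))
    have hpow := ((hasDerivAt_id z).sub_const x).rpow_const (p := p) (Or.inr hp1)
    exact (((hlin.const_add (x ^ p)).add hpow).sub (hasDerivAt_rpow_const (Or.inr hp1))).congr_deriv
      (by simp)
  have hmono : MonotoneOn φ (Ici x) := by
    refine monotoneOn_of_hasDerivWithinAt_nonneg (convex_Ici x)
      (fun z _ ↦ (hφ' z).continuousAt.continuousWithinAt) (fun z _ ↦ (hφ' z).hasDerivWithinAt)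
      fun z hz ↦ ?_
    rw [interior_Ici] at hz
    have := rpow_sub_rpow_le_rpow_sub (q := p - 1) (by linarith) (by linarith) hx hz.le
    nlinarith
  have h := hmono self_mem_Ici hxy hxy
  simp only [φ, sub_self, mul_zero, add_zero, zero_rpow (by linarith : p ≠ 0), sub_nonneg] at h
  linarith

lemma rpow_le_tangent_add_rpow_sub_of_ge {p x y : ℝ} (hp1 : 1 ≤ p) (hp2 : p ≤ 2) (hy : 0 ≤ y)
    (hyx : y ≤ x) : y ^ p ≤ x ^ p + p * x ^ (p - 1) * (y - x) + (x - y) ^ p := by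
  set φ : ℝ → ℝ := fun z ↦ x ^ p + p * x ^ (p - 1) * (z - x) + (x - z) ^ p - z ^ p
  have hφ' (z : ℝ) :
      HasDerivAt φ (p * x ^ (p - 1) - p * (x - z) ^ (p - 1) - p * z ^ (p - 1)) z := by
    have hlin := ((hasDerivAt_id z).sub_const x).const_mul (p * x ^ (p - 1))
    have hpow := ((hasDerivAt_id z).const_sub x).rpow_const (p := p) (Or.inr hp1)
    exact (((hlin.const_add (x ^ p)).add hpow).sub (hasDerivAt_rpow_const (Or.inr hp1))).congr_deriv
      (by simp; ring)
  have hanti : AntitoneOn φ (Icc 0 x) := by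
    refine antitoneOn_of_hasDerivWithinAt_nonpos (convex_Icc 0 x)
      (fun z _ ↦ (hφ' z).continuousAt.continuousWithinAt) (fun z _ ↦ (hφ' z).hasDerivWithinAt)
      fun z hz ↦ ?_
    rw [interior_Icc] at hz
    have := rpow_sub_rpow_le_rpow_sub (q := p - 1) (by linarith) (by linarith) hz.1.le hz.2.le
    nlinarith
  have h := hanti ⟨hy, hyx⟩ ⟨hy.trans hyx, le_rfl⟩ hyx
  simp only [φ, sub_self, mul_zero, add_zero, zero_rpow (by linarith : p ≠ 0), sub_nonneg] at h
  linarith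

end Real

/-- For 1 ≤ p ≤ 2 the power function x ↦ x^p is subquadratic on [0,∞), with
C(x) = p·x^{p-1} as an admissible constant. -/
theorem rpow_subquadratic (p : ℝ) (hp1 : 1 ≤ p) (hp2 : p ≤ 2) (x : ℝ) (hx : 0 ≤ x) :
    ∃ C : ℝ, C = p * x ^ (p - 1) ∧
      ∀ y : ℝ, 0 ≤ y → y ^ p ≤ x ^ p + C * (y - x) + |y - x| ^ p := by
  refine ⟨_, rfl, fun y hy ↦ ?_⟩
  rcases le_total x y with hxy | hyx
  · rw [abs_of_nonneg (sub_nonneg.2 hxy)]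
    exact Real.rpow_le_tangent_add_rpow_sub_of_le hp1 hp2 hx hxy
  · rw [abs_sub_comm, abs_of_nonneg (sub_nonneg.2 hyx)]
    exact Real.rpow_le_tangent_add_rpow_sub_of_ge hp1 hp2 hy hyx
end

section
/- Let f : [0,∞) → ℝ be a superquadratic function, let n be a positive integer, let x_1,…,x_n ∈ [0,∞), and let α_1,…,α_n be nonnegative real numbers with Σ_{i=1}^n α_i = 1. Then f(Σ_{i=1}^n α_i·x_i) ≤ Σ_{i=1}^n α_i·( f(x_i) − f(| x_i − Σ_{j=1}^n α_j·x_j |) ). -/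
open Finset in
/-- Discrete Jensen type inequality (2.3) for superquadratic functions. -/
theorem superquadratic_discrete_jensen (f : ℝ → ℝ)
    (hf : ∀ x : ℝ, 0 ≤ x → ∃ C : ℝ, ∀ y : ℝ, 0 ≤ y →
      f x + C * (y - x) + f |y - x| ≤ f y)
    (n : ℕ) (hn : 0 < n) (x : Fin n → ℝ) (hx : ∀ i, 0 ≤ x i)
    (α : Fin n → ℝ) (hα : ∀ i, 0 ≤ α i) (hα1 : ∑ i, α i = 1) :
    f (∑ i, α i * x i) ≤ ∑ i, α i * (f (x i) - f |x i - ∑ j, α j * x j|) := by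
  set m := ∑ i, α i * x i with hm
  have hm0 : 0 ≤ m := Finset.sum_nonneg fun i _ => mul_nonneg (hα i) (hx i)
  obtain ⟨C, hC⟩ := hf m hm0
  have key : ∀ i, α i * (f m + C * (x i - m) + f |x i - m|) ≤ α i * f (x i) :=
    fun i => mul_le_mul_of_nonneg_left (hC (x i) (hx i)) (hα i)
  have hsum := Finset.sum_le_sum (fun i (_ : i ∈ Finset.univ) => key i)
  have h1 : ∑ i, α i * (f m + C * (x i - m) + f |x i - m|)
      = f m + ∑ i, α i * f |x i - m| := by
    have : ∑ i, α i * (x i - m) = 0 := by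
      simp [mul_sub, Finset.sum_sub_distrib, ← Finset.sum_mul, hα1, hm]
    simp only [mul_add, Finset.sum_add_distrib, ← Finset.sum_mul, hα1, one_mul]
    have h2 : ∑ i, α i * (C * (x i - m)) = C * ∑ i, α i * (x i - m) := by
      rw [Finset.mul_sum]; exact Finset.sum_congr rfl fun i _ => by ring
    rw [h2, this]; ring
  rw [h1] at hsum
  have : ∑ i, α i * (f (x i) - f |x i - m|)
      = ∑ i, α i * f (x i) - ∑ i, α i * f |x i - m| := by
    simp [mul_sub, Finset.sum_sub_distrib]
  rw [this]
  linarith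
end
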